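/- arXiv:1804.01116 — 5 statements merged into one kernel-verified Lean document; each statement's English description precedes it below -/
import Mathlib

section
/- Renewal relationship for discounted performance (Proposition 1, closed-loop finite-state form). Let S be a nonempty finite state space, P a Markov kernel from S to S (the closed-loop transition kernel of an MDP under a fixed stationary policy), r : S × S → ℝ a reward function, γ ∈ (0,1) a discount factor, and s₀ ∈ S a designated start state. Let μ be the trajectory law of the Markov chain (X_t)_{t≥0} started at s₀ with transition kernel P (the Ionescu–Tulcea / Kernel.traj measure), and let τ = inf{t ≥ 1 : X_t = s₀} be the first return time to s₀. Assume τ < ∞ μ-almost surely. Define J = E_μ[∑_{t=0}^∞ γ^t r(X_t, X_{t+1})], R = E_μ[∑_{t=0}^{τ−1} γ^t r(X_t, X_{t+1})], and T = E_μ[∑_{t=0}^{τ−1} γ^t]. Then T > 0 and J = R / ((1 − γ) T). -/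
/-!
By the Markov property, `E[∏_{i<t} g(X_{i+1}) k(X_t, X_{t+1})] = ((P diag g)ᵗ ρ_k)(s₀)` where
`ρ_k(s) = ∑_{s'} P(s,s') k(s,s')`. With `g = 1` this writes `J` through the resolvent
`G_P = ∑ₜ (γP)ᵗ`; with the gate `g = 1 - 𝟙{s₀}`, whose products vanish from the first return on,
it writes `R` and `T` through the resolvent `G_Q` of the killed matrix `Q = P diag g`.
As `P - Q` is supported on the column `s₀`, the resolvent identity
`G_P - G_Q = γ G_Q (P - Q) G_P` gives `J = R + c J` with `c = γ (G_Q P)(s₀, s₀)`, and for the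
reward `1`, where `G_P 1 = (1 - γ)⁻¹`, it gives `(1 - γ) T = 1 - c`.
-/

open scoped Classical
open MeasureTheory Finset

section

open Matrix

attribute [local instance] Matrix.linftyOpNormedRing Matrix.linftyOpNormedAlgebra

theorem one_sub_single_nonneg {S : Type*} (s₀ : S) : 0 ≤ (1 - Pi.single s₀ 1 : S → ℝ) := by
  intro s
  by_cases h : s = s₀ <;> simp [h]

theorem norm_one_sub_single_le_one {S : Type*} [Fintype S] (s₀ : S) :
    ‖(1 - Pi.single s₀ 1 : S → ℝ)‖ ≤ 1 := by
  refine (pi_norm_le_iff_of_nonneg zero_le_one).2 fun s => ?_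
  by_cases h : s = s₀ <;> simp [h]

namespace Matrix

variable {S : Type*} [Fintype S]

theorem linfty_opNorm_le_one_of_mem_rowStochastic {P : Matrix S S ℝ}
    (hP : P ∈ rowStochastic ℝ S) : ‖P‖ ≤ 1 := by
  rw [linfty_opNorm_def, NNReal.coe_le_one, Finset.sup_le_iff]
  intro i _
  rw [← NNReal.coe_le_one, NNReal.coe_sum]
  simp only [coe_nnnorm, Real.norm_eq_abs, abs_of_nonneg (nonneg_of_mem_rowStochastic hP),
    sum_row_of_mem_rowStochastic hP, le_refl]

theorem linfty_opNorm_mul_diagonal_le_one {P : Matrix S S ℝ} (hP : P ∈ rowStochastic ℝ S)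
    {g : S → ℝ} (hg : ‖g‖ ≤ 1) : ‖P * diagonal g‖ ≤ 1 :=
  calc ‖P * diagonal g‖ ≤ ‖P‖ * ‖g‖ := by
        simpa using linfty_opNorm_mul P (diagonal g)
    _ ≤ 1 * 1 := by
        gcongr
        exact linfty_opNorm_le_one_of_mem_rowStochastic hP
    _ = 1 := one_mul 1

noncomputable def discountedResolvent (γ : ℝ) (M : Matrix S S ℝ) : Matrix S S ℝ :=
  ∑' t : ℕ, (γ • M) ^ t

variable {γ : ℝ} {M : Matrix S S ℝ}

theorem norm_smul_lt_one (hγ : γ ∈ Set.Ico (0 : ℝ) 1) (hM : ‖M‖ ≤ 1) : ‖γ • M‖ < 1 := by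
  rw [norm_smul, Real.norm_of_nonneg hγ.1]
  nlinarith [mul_le_mul_of_nonneg_left hM hγ.1, hγ.2]

theorem discountedResolvent_mul (hγ : γ ∈ Set.Ico (0 : ℝ) 1) (hM : ‖M‖ ≤ 1) :
    discountedResolvent γ M * (1 - γ • M) = 1 :=
  geom_series_mul_neg _ (norm_smul_lt_one hγ hM)

theorem mul_discountedResolvent (hγ : γ ∈ Set.Ico (0 : ℝ) 1) (hM : ‖M‖ ≤ 1) :
    (1 - γ • M) * discountedResolvent γ M = 1 :=
  mul_neg_geom_series _ (norm_smul_lt_one hγ hM)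

theorem hasSum_discountedResolvent_mulVec (hγ : γ ∈ Set.Ico (0 : ℝ) 1) (hM : ‖M‖ ≤ 1)
    (ρ : S → ℝ) (s : S) :
    HasSum (fun t : ℕ => γ ^ t * (M ^ t *ᵥ ρ) s) ((discountedResolvent γ M *ᵥ ρ) s) := by
  have hsum : HasSum (fun t : ℕ => (γ • M) ^ t) (discountedResolvent γ M) :=
    (summable_geometric_of_norm_lt_one (norm_smul_lt_one hγ hM)).hasSum
  have hentry (j : S) : HasSum (fun t : ℕ => ((γ • M) ^ t) s j) (discountedResolvent γ M s j) :=
    Pi.hasSum.1 (Pi.hasSum.1 hsum s) j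
  simpa [mulVec, dotProduct, smul_pow, Finset.mul_sum, mul_assoc] using
    hasSum_sum fun j _ => (hentry j).mul_right (ρ j)

theorem discountedResolvent_sub (hγ : γ ∈ Set.Ico (0 : ℝ) 1) {A B : Matrix S S ℝ}
    (hA : ‖A‖ ≤ 1) (hB : ‖B‖ ≤ 1) :
    discountedResolvent γ A - discountedResolvent γ B
      = γ • (discountedResolvent γ B * (A - B) * discountedResolvent γ A) := by
  calc discountedResolvent γ A - discountedResolvent γ B
      = discountedResolvent γ B * (1 - γ • B) * discountedResolvent γ A
        - discountedResolvent γ B * ((1 - γ • A) * discountedResolvent γ A) := by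
        rw [discountedResolvent_mul hγ hB, mul_discountedResolvent hγ hA, one_mul, mul_one]
    _ = γ • (discountedResolvent γ B * (A - B) * discountedResolvent γ A) := by
        simp only [mul_sub, sub_mul, mul_one, one_mul, mul_smul_comm, smul_mul_assoc, smul_sub,
          mul_assoc]
        abel

theorem discountedResolvent_mulVec_one (hγ : γ ∈ Set.Ico (0 : ℝ) 1) {P : Matrix S S ℝ}
    (hP : P ∈ rowStochastic ℝ S) : discountedResolvent γ P *ᵥ 1 = (1 - γ)⁻¹ • 1 := by
  have h1 : (1 - γ • P) *ᵥ (1 : S → ℝ) = (1 - γ) • 1 := by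
    rw [sub_mulVec, one_mulVec, smul_mulVec, one_vecMul_of_mem_rowStochastic hP, sub_smul,
      one_smul]
  have hγ1 : (1 - γ) ≠ 0 := by linarith [hγ.2]
  calc discountedResolvent γ P *ᵥ 1
      = (1 - γ)⁻¹ • (discountedResolvent γ P *ᵥ ((1 - γ • P) *ᵥ 1)) := by
        rw [h1, mulVec_smul, smul_smul, inv_mul_cancel₀ hγ1, one_smul]
    _ = (1 - γ)⁻¹ • 1 := by
        rw [mulVec_mulVec,
          discountedResolvent_mul hγ (linfty_opNorm_le_one_of_mem_rowStochastic hP), one_mulVec]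

theorem mul_diagonal_single_mul_mulVec_apply (X Y : Matrix S S ℝ) (i j : S) (ρ : S → ℝ) :
    ((X * diagonal (Pi.single j 1) * Y) *ᵥ ρ) i = X i j * (Y *ᵥ ρ) j := by
  have hdiag : diagonal (Pi.single j 1) *ᵥ (Y *ᵥ ρ) = Pi.single j ((Y *ᵥ ρ) j) := by
    ext k
    by_cases hk : k = j <;> simp [mulVec_diagonal, hk]
  rw [← mulVec_mulVec, ← mulVec_mulVec, hdiag, mulVec_single]
  simp

noncomputable def killedAt (P : Matrix S S ℝ) (s₀ : S) : Matrix S S ℝ :=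
  P * diagonal (1 - Pi.single s₀ 1)

theorem linfty_opNorm_killedAt_le_one {P : Matrix S S ℝ} (hP : P ∈ rowStochastic ℝ S) (s₀ : S) :
    ‖killedAt P s₀‖ ≤ 1 :=
  linfty_opNorm_mul_diagonal_le_one hP (norm_one_sub_single_le_one s₀)

/-- `γ (G Q * P) s₀ s₀`, with `Q = killedAt P s₀`, is the discounted weight of the first return
to `s₀`. -/
theorem discountedResolvent_mulVec_apply_renewal (hγ : γ ∈ Set.Ico (0 : ℝ) 1)
    {P : Matrix S S ℝ} (hP : P ∈ rowStochastic ℝ S) (s₀ : S) (ρ : S → ℝ) :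
    (discountedResolvent γ P *ᵥ ρ) s₀
      = (discountedResolvent γ (killedAt P s₀) *ᵥ ρ) s₀
        + γ * (discountedResolvent γ (killedAt P s₀) * P) s₀ s₀
          * (discountedResolvent γ P *ᵥ ρ) s₀ := by
  have hPQ : P - killedAt P s₀ = P * diagonal (Pi.single s₀ 1) := by
    have hdiag : (1 - diagonal (1 - Pi.single s₀ 1) : Matrix S S ℝ)
        = diagonal (Pi.single s₀ 1) := by
      rw [← diagonal_one, diagonal_sub]
      simp
    rw [killedAt, ← hdiag, mul_sub, mul_one]
  have hres := discountedResolvent_sub hγ (linfty_opNorm_le_one_of_mem_rowStochastic hP)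
    (linfty_opNorm_killedAt_le_one hP s₀)
  rw [sub_eq_iff_eq_add', hPQ, ← mul_assoc] at hres
  conv_lhs => rw [hres]
  rw [add_mulVec, Pi.add_apply, smul_mulVec, Pi.smul_apply, smul_eq_mul,
    mul_diagonal_single_mul_mulVec_apply, mul_assoc]

theorem discountedResolvent_mulVec_apply_mul_eq (hγ : γ ∈ Set.Ico (0 : ℝ) 1)
    {P : Matrix S S ℝ} (hP : P ∈ rowStochastic ℝ S) (s₀ : S) (ρ : S → ℝ) :
    (discountedResolvent γ P *ᵥ ρ) s₀
        * ((1 - γ) * (discountedResolvent γ (killedAt P s₀) *ᵥ 1) s₀)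
      = (discountedResolvent γ (killedAt P s₀) *ᵥ ρ) s₀ := by
  have hρ := discountedResolvent_mulVec_apply_renewal hγ hP s₀ ρ
  have h1 := discountedResolvent_mulVec_apply_renewal hγ hP s₀ 1
  rw [discountedResolvent_mulVec_one hγ hP] at h1
  have hγ1 : 1 - γ ≠ 0 := by linarith [hγ.2]
  simp only [Pi.smul_apply, Pi.one_apply, smul_eq_mul, mul_one] at h1
  field_simp at h1
  linear_combination hρ - (discountedResolvent γ P *ᵥ ρ) s₀ * h1

end Matrix

theorem MeasureTheory.integral_comp_eq_sum {Ω X : Type*} [MeasurableSpace Ω] [Fintype X]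
    [MeasurableSpace X] [MeasurableSingletonClass X] (μ : Measure Ω) [IsFiniteMeasure μ]
    {π : Ω → X} (hπ : Measurable π) (f : X → ℝ) :
    ∫ ω, f (π ω) ∂μ = ∑ x, μ.real (π ⁻¹' {x}) * f x := by
  rw [← integral_map hπ.aemeasurable (measurable_of_finite f).aestronglyMeasurable,
    integral_fintype .of_finite]
  simp [map_measureReal_apply hπ (measurableSet_singleton _)]

def expectedReward {S : Type*} [Fintype S] (P : Matrix S S ℝ) (k : S → S → ℝ) (s : S) : ℝ :=
  ∑ y, P s y * k s y

theorem expectedReward_mul_diagonal {S : Type*} [Fintype S] (P : Matrix S S ℝ) (g h : S → ℝ) :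
    expectedReward P (fun _ y => g y * h y) = (P * diagonal g) *ᵥ h := by
  ext s
  simp [expectedReward, mulVec, dotProduct, mul_assoc]

theorem expectedReward_one {S : Type*} [Fintype S] {P : Matrix S S ℝ}
    (hP : P ∈ rowStochastic ℝ S) : expectedReward P (fun _ _ => 1) = 1 := by
  ext s
  simp [expectedReward, sum_row_of_mem_rowStochastic hP]

theorem prod_range_eq_prod_fin_succ {S : Type*} (g : S → ℝ) (ω : ℕ → S) (t : ℕ) :
    ∏ i ∈ range t, g (ω (i + 1)) = ∏ i : Fin t, g ((fun j : Fin (t + 1) => ω j) i.succ) := by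
  simp [Fin.prod_univ_eq_prod_range (fun i => g (ω (i + 1)))]

/-- The gate product `∏_{i<t} (1 - 𝟙{s₀}) (ω (i + 1))` is `1` strictly before the first return
to `s₀` and `0` from it on. -/
theorem sum_range_sInf_eq_tsum {S : Type*} {s₀ : S} {ω : ℕ → S} (hω : ∃ t, 1 ≤ t ∧ ω t = s₀)
    (f : ℕ → ℝ) :
    ∑ t ∈ range (sInf {t | 1 ≤ t ∧ ω t = s₀}), f t
      = ∑' t, (∏ i ∈ range t, (1 - Pi.single s₀ 1 : S → ℝ) (ω (i + 1))) * f t := by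
  have hlt (t : ℕ) : t < sInf {t | 1 ≤ t ∧ ω t = s₀} ↔ ∀ i ∈ range t, ω (i + 1) ≠ s₀ := by
    rw [← Nat.succ_le_iff, le_csInf_iff (s := {t | 1 ≤ t ∧ ω t = s₀}) (OrderBot.bddBelow _) hω]
    constructor
    · intro h i hi hret
      have := h (i + 1) ⟨by omega, hret⟩
      simp at hi
      omega
    · rintro h j ⟨hj, hret⟩
      by_contra! hjt
      exact h (j - 1) (mem_range.2 (by omega)) (by rwa [Nat.sub_add_cancel hj])
  have hgate (s : S) : (1 - Pi.single s₀ 1 : S → ℝ) s = if s ≠ s₀ then 1 else 0 := by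
    by_cases h : s = s₀ <;> simp [h]
  have hprod (t : ℕ) : ∏ i ∈ range t, (1 - Pi.single s₀ 1 : S → ℝ) (ω (i + 1))
      = if t < sInf {t | 1 ≤ t ∧ ω t = s₀} then 1 else 0 := by
    simp only [hgate, prod_boole, hlt]
  rw [tsum_eq_sum fun t ht => by rw [hprod, if_neg (mt mem_range.2 ht), zero_mul]]
  exact sum_congr rfl fun t ht => by rw [hprod, if_pos (mem_range.1 ht), one_mul]

/-- The cylinder probabilities of the trajectory law `Kernel.traj` of the chain started at `s₀`. -/
def IsMarkovChainLaw {S : Type*} [MeasurableSpace S] (P : Matrix S S ℝ) (s₀ : S)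
    (μ : Measure (ℕ → S)) : Prop :=
  ∀ (n : ℕ) (s : ℕ → S), (μ {ω | ∀ i ≤ n, ω i = s i}).toReal
    = (if s 0 = s₀ then (1 : ℝ) else 0) * ∏ i ∈ range n, P (s i) (s (i + 1))

namespace IsMarkovChainLaw

variable {S : Type*} [MeasurableSpace S] {P : Matrix S S ℝ} {s₀ : S} {μ : Measure (ℕ → S)}

theorem ae_eval_zero [MeasurableSingletonClass S] [IsProbabilityMeasure μ]
    (hμ : IsMarkovChainLaw P s₀ μ) : ∀ᵐ ω ∂μ, ω 0 = s₀ := by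
  have h := hμ 0 fun _ => s₀
  simp only [nonpos_iff_eq_zero, forall_eq, if_true, range_zero, prod_empty, mul_one] at h
  have hmeas : MeasurableSet {ω : ℕ → S | ω 0 = s₀} :=
    (measurableSet_singleton s₀).preimage (measurable_pi_apply 0)
  rw [ae_iff_measure_eq hmeas.nullMeasurableSet, measure_univ]
  exact (ENNReal.toReal_eq_one_iff _).1 h

theorem measureReal_eq_and_eq (hμ : IsMarkovChainLaw P s₀ μ) (n : ℕ)
    (v : Fin (n + 1) → S) (y : S) :
    μ.real {ω | (fun i : Fin (n + 1) => ω i) = v ∧ ω (n + 1) = y}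
      = μ.real {ω | (fun i : Fin (n + 1) => ω i) = v} * P (v (Fin.last n)) y := by
  set s : ℕ → S := fun i => if h : i < n + 1 then v ⟨i, h⟩ else y
  have hcyl_succ : {ω : ℕ → S | (fun i : Fin (n + 1) => ω i) = v ∧ ω (n + 1) = y}
      = {ω | ∀ i ≤ n + 1, ω i = s i} := by
    ext ω
    simp only [s, Set.mem_ofPred_eq, funext_iff, Fin.forall_iff, Nat.lt_succ_iff]
    constructor
    · rintro ⟨hv, hy⟩ i hi
      rcases Nat.of_le_succ hi with hi | rfl
      · rw [dif_pos hi]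
        exact hv i hi
      · simpa using hy
    · intro h
      exact ⟨fun i hi => by simpa [hi] using h i (by omega), by simpa using h (n + 1) le_rfl⟩
  have hcyl : {ω : ℕ → S | (fun i : Fin (n + 1) => ω i) = v} = {ω | ∀ i ≤ n, ω i = s i} := by
    ext ω
    simp only [s, Set.mem_ofPred_eq, funext_iff, Fin.forall_iff, Nat.lt_succ_iff]
    exact forall₂_congr fun i hi => by rw [dif_pos hi]
  rw [hcyl_succ, hcyl, measureReal_def, measureReal_def, hμ, hμ, prod_range_succ, ← mul_assoc]
  simp [s, Fin.last]

variable [Fintype S] [MeasurableSingletonClass S] [IsProbabilityMeasure μ]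

theorem integral_mul_step (hμ : IsMarkovChainLaw P s₀ μ) (n : ℕ) (φ : (Fin (n + 1) → S) → ℝ)
    (k : S → S → ℝ) :
    ∫ ω, φ (fun i => ω i) * k (ω n) (ω (n + 1)) ∂μ
      = ∫ ω, φ (fun i => ω i) * expectedReward P k (ω n) ∂μ := by
  have hπ : Measurable fun ω : ℕ → S => fun i : Fin (n + 1) => ω i :=
    measurable_pi_lambda _ fun i => measurable_pi_apply _
  have hL := integral_comp_eq_sum μ (hπ.prodMk (measurable_pi_apply (n + 1)))
    fun p => φ p.1 * k (p.1 (Fin.last n)) p.2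
  have hR := integral_comp_eq_sum μ hπ fun v => φ v * expectedReward P k (v (Fin.last n))
  simp only [Fin.val_last] at hL hR
  rw [hL, hR, Fintype.sum_prod_type]
  refine sum_congr rfl fun v _ => ?_
  have hpre (y : S) : (fun ω : ℕ → S => ((fun i : Fin (n + 1) => ω i), ω (n + 1))) ⁻¹' {(v, y)}
      = {ω | (fun i : Fin (n + 1) => ω i) = v ∧ ω (n + 1) = y} := by
    ext ω
    simp
  simp only [hpre, hμ.measureReal_eq_and_eq, expectedReward, mul_sum]
  refine sum_congr rfl fun y _ => ?_
  simp only [Set.preimage, Set.mem_singleton_iff]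
  ring

theorem integral_prod_mul (hμ : IsMarkovChainLaw P s₀ μ) (g h : S → ℝ) (t : ℕ) :
    ∫ ω, (∏ i ∈ range t, g (ω (i + 1))) * h (ω t) ∂μ = ((P * diagonal g) ^ t *ᵥ h) s₀ := by
  induction t generalizing h with
  | zero =>
    simp only [range_zero, prod_empty, one_mul, pow_zero, one_mulVec]
    rw [integral_congr_ae (hμ.ae_eval_zero.mono fun ω hω => congrArg h hω)]
    simp
  | succ t ih =>
    calc ∫ ω, (∏ i ∈ range (t + 1), g (ω (i + 1))) * h (ω (t + 1)) ∂μ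
        = ∫ ω, (∏ i : Fin t, g ((fun j : Fin (t + 1) => ω j) i.succ))
            * (fun _ y => g y * h y) (ω t) (ω (t + 1)) ∂μ := by
          simp only [prod_range_succ, prod_range_eq_prod_fin_succ, mul_assoc]
      _ = ∫ ω, (∏ i ∈ range t, g (ω (i + 1))) * ((P * diagonal g) *ᵥ h) (ω t) ∂μ := by
          refine (hμ.integral_mul_step t (fun v => ∏ i : Fin t, g (v i.succ))
            fun _ y => g y * h y).trans ?_
          simp only [expectedReward_mul_diagonal, prod_range_eq_prod_fin_succ]
      _ = ((P * diagonal g) ^ (t + 1) *ᵥ h) s₀ := by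
          rw [ih, mulVec_mulVec, ← pow_succ]

theorem integral_prod_mul_reward (hμ : IsMarkovChainLaw P s₀ μ) (g : S → ℝ) (k : S → S → ℝ)
    (t : ℕ) :
    ∫ ω, (∏ i ∈ range t, g (ω (i + 1))) * k (ω t) (ω (t + 1)) ∂μ
      = ((P * diagonal g) ^ t *ᵥ expectedReward P k) s₀ := by
  simp only [prod_range_eq_prod_fin_succ]
  refine (hμ.integral_mul_step t (fun v => ∏ i : Fin t, g (v i.succ)) k).trans ?_
  simp only [← hμ.integral_prod_mul, prod_range_eq_prod_fin_succ]

theorem integral_tsum_prod_mul_reward (hμ : IsMarkovChainLaw P s₀ μ)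
    (hP : P ∈ rowStochastic ℝ S) {γ : ℝ} (hγ : γ ∈ Set.Ico (0 : ℝ) 1) {g : S → ℝ}
    (hg : ‖g‖ ≤ 1) (k : S → S → ℝ) :
    ∫ ω, ∑' t, (∏ i ∈ range t, g (ω (i + 1))) * (γ ^ t * k (ω t) (ω (t + 1))) ∂μ
      = (discountedResolvent γ (P * diagonal g) *ᵥ expectedReward P k) s₀ := by
  set F : ℕ → (ℕ → S) → ℝ :=
    fun t ω => (∏ i ∈ range t, g (ω (i + 1))) * (γ ^ t * k (ω t) (ω (t + 1)))
  have hF_le (t : ℕ) (ω : ℕ → S) : ‖F t ω‖ ≤ γ ^ t * ‖k‖ :=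
    calc ‖F t ω‖ = ‖∏ i ∈ range t, g (ω (i + 1))‖ * (γ ^ t * ‖k (ω t) (ω (t + 1))‖) := by
          simp [F, norm_pow, abs_of_nonneg hγ.1]
      _ ≤ 1 * (γ ^ t * ‖k‖) := by
          have hprod : ‖∏ i ∈ range t, g (ω (i + 1))‖ ≤ 1 := (Finset.norm_prod_le _ _).trans
            (prod_le_one (fun _ _ => norm_nonneg _) fun i _ => (norm_le_pi_norm g _).trans hg)
          have hk : ‖k (ω t) (ω (t + 1))‖ ≤ ‖k‖ :=
            (norm_le_pi_norm (k (ω t)) _).trans (norm_le_pi_norm k _)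
          have hγt : 0 ≤ γ ^ t := pow_nonneg hγ.1 t
          gcongr
      _ = γ ^ t * ‖k‖ := one_mul _
  have hF_int (t : ℕ) : Integrable (F t) μ :=
    .of_bound (Measurable.aestronglyMeasurable (by simp only [F]; fun_prop)) _
      (ae_of_all _ (hF_le t))
  have hF_sum : Summable fun t => ∫ ω, ‖F t ω‖ ∂μ := by
    refine .of_nonneg_of_le (fun t => integral_nonneg fun _ => norm_nonneg _) (fun t => ?_)
      ((summable_geometric_of_lt_one hγ.1 hγ.2).mul_right ‖k‖)
    calc ∫ ω, ‖F t ω‖ ∂μ ≤ ∫ _, γ ^ t * ‖k‖ ∂μ :=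
          integral_mono (hF_int t).norm (integrable_const _) (hF_le t)
      _ = γ ^ t * ‖k‖ := by simp
  change ∫ ω, ∑' t, F t ω ∂μ = _
  rw [← integral_tsum_of_summable_integral_norm hF_int hF_sum]
  simp only [F, mul_left_comm _ (γ ^ _), integral_const_mul, hμ.integral_prod_mul_reward]
  exact (hasSum_discountedResolvent_mulVec hγ
    (linfty_opNorm_mul_diagonal_le_one hP hg) _ _).tsum_eq

theorem integral_tsum_discounted (hμ : IsMarkovChainLaw P s₀ μ) (hP : P ∈ rowStochastic ℝ S)
    {γ : ℝ} (hγ : γ ∈ Set.Ico (0 : ℝ) 1) (k : S → S → ℝ) :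
    ∫ ω, ∑' t, γ ^ t * k (ω t) (ω (t + 1)) ∂μ
      = (discountedResolvent γ P *ᵥ expectedReward P k) s₀ := by
  simpa using hμ.integral_tsum_prod_mul_reward hP hγ (g := 1)
    ((pi_norm_le_iff_of_nonneg zero_le_one).2 fun _ => by simp) k

theorem integral_sum_range_firstReturn (hμ : IsMarkovChainLaw P s₀ μ)
    (hP : P ∈ rowStochastic ℝ S) {γ : ℝ} (hγ : γ ∈ Set.Ico (0 : ℝ) 1)
    (hret : ∀ᵐ ω ∂μ, ∃ t, 1 ≤ t ∧ ω t = s₀) (k : S → S → ℝ) :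
    ∫ ω, ∑ t ∈ range (sInf {t | 1 ≤ t ∧ ω t = s₀}), γ ^ t * k (ω t) (ω (t + 1)) ∂μ
      = (discountedResolvent γ (killedAt P s₀) *ᵥ expectedReward P k) s₀ := by
  rw [integral_congr_ae (hret.mono fun ω hω => sum_range_sInf_eq_tsum hω _)]
  exact hμ.integral_tsum_prod_mul_reward hP hγ (norm_one_sub_single_le_one s₀) k

theorem one_le_discountedResolvent_killedAt_mulVec_one (hμ : IsMarkovChainLaw P s₀ μ)
    (hP : P ∈ rowStochastic ℝ S) {γ : ℝ} (hγ : γ ∈ Set.Ico (0 : ℝ) 1) :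
    1 ≤ (discountedResolvent γ (killedAt P s₀) *ᵥ 1) s₀ := by
  have hterm (t : ℕ) : 0 ≤ γ ^ t * (killedAt P s₀ ^ t *ᵥ 1) s₀ := by
    rw [killedAt, ← hμ.integral_prod_mul]
    exact mul_nonneg (pow_nonneg hγ.1 t) (integral_nonneg fun ω =>
      mul_nonneg (prod_nonneg fun i _ => one_sub_single_nonneg s₀ _) zero_le_one)
  simpa using le_hasSum (hasSum_discountedResolvent_mulVec hγ
    (linfty_opNorm_killedAt_le_one hP s₀) 1 s₀) 0 fun t _ => hterm t

end IsMarkovChainLaw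

end

theorem renewal_relationship_discounted_general
    {S : Type*} [Fintype S]
    [MeasurableSpace S] [MeasurableSingletonClass S]
    (P : S → S → ℝ) (hP0 : ∀ s s', 0 ≤ P s s') (hP1 : ∀ s, ∑ s', P s s' = 1)
    (r : S → S → ℝ) (γ : ℝ) (hγ : γ ∈ Set.Ioo (0 : ℝ) 1) (s₀ : S)
    (μ : Measure (ℕ → S)) [IsProbabilityMeasure μ]
    (hμ : ∀ (n : ℕ) (s : ℕ → S),
      (μ {ω | ∀ i ≤ n, ω i = s i}).toReal
        = (if s 0 = s₀ then (1 : ℝ) else 0) * ∏ i ∈ range n, P (s i) (s (i + 1)))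
    (τ : (ℕ → S) → ℕ)
    (hτ : ∀ ω, τ ω = sInf {t : ℕ | 1 ≤ t ∧ ω t = s₀})
    (hτfin : ∀ᵐ ω ∂μ, ∃ t : ℕ, 1 ≤ t ∧ ω t = s₀)
    (J R T : ℝ)
    (hJ : J = ∫ ω, (∑' t : ℕ, γ ^ t * r (ω t) (ω (t + 1))) ∂μ)
    (hR : R = ∫ ω, (∑ t ∈ range (τ ω), γ ^ t * r (ω t) (ω (t + 1))) ∂μ)
    (hT : T = ∫ ω, (∑ t ∈ range (τ ω), γ ^ t) ∂μ) :
    0 < T ∧ J = R / ((1 - γ) * T) := by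
  have hP : P ∈ Matrix.rowStochastic ℝ S := Matrix.mem_rowStochastic_iff_sum.2 ⟨hP0, hP1⟩
  have hμ' : IsMarkovChainLaw P s₀ μ := hμ
  have hγ' : γ ∈ Set.Ico (0 : ℝ) 1 := Set.Ioo_subset_Ico_self hγ
  simp only [hτ] at hR hT
  rw [hμ'.integral_tsum_discounted hP hγ'] at hJ
  rw [hμ'.integral_sum_range_firstReturn hP hγ' hτfin] at hR
  have hT' := hμ'.integral_sum_range_firstReturn hP hγ' hτfin fun _ _ => 1
  simp only [mul_one, expectedReward_one hP, ← hT] at hT'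
  have hT1 : 1 ≤ T := hT' ▸ hμ'.one_le_discountedResolvent_killedAt_mulVec_one hP hγ'
  refine ⟨by linarith, (eq_div_iff (mul_pos (by linarith [hγ.2]) (by linarith)).ne').2 ?_⟩
  rw [hJ, hR, hT']
  exact Matrix.discountedResolvent_mulVec_apply_mul_eq hγ' hP s₀ _

/-- **Renewal relationship for discounted performance (Proposition 1,
closed-loop finite-state form).**
Let `S` be a nonempty finite state space, `P` a Markov (stochastic) transition
kernel on `S` (given in finite-state form by a row-stochastic matrix),
`r : S × S → ℝ` a reward, `γ ∈ (0,1)` a discount factor and `s₀` a designated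
start state. Let `μ` be the trajectory law of the Markov chain started at `s₀`
with transitions `P` (characterized by its finite-dimensional cylinder
probabilities, as produced by the Ionescu–Tulcea construction), and let
`τ(ω) = inf {t ≥ 1 : ω_t = s₀}` be the first return time to `s₀`, assumed
finite `μ`-a.s. With
`J = E_μ[∑_{t=0}^∞ γ^t r(X_t, X_{t+1})]`,
`R = E_μ[∑_{t=0}^{τ−1} γ^t r(X_t, X_{t+1})]` and
`T = E_μ[∑_{t=0}^{τ−1} γ^t]`, we have `T > 0` and `J = R / ((1 − γ) T)`. -/
theorem renewal_relationship_discounted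
    {S : Type*} [Fintype S] [Nonempty S]
    [MeasurableSpace S] [MeasurableSingletonClass S]
    (P : S → S → ℝ) (hP0 : ∀ s s', 0 ≤ P s s') (hP1 : ∀ s, ∑ s', P s s' = 1)
    (r : S → S → ℝ) (γ : ℝ) (hγ : γ ∈ Set.Ioo (0 : ℝ) 1) (s₀ : S)
    (μ : Measure (ℕ → S)) [IsProbabilityMeasure μ]
    (hμ : ∀ (n : ℕ) (s : ℕ → S),
      (μ {ω | ∀ i ≤ n, ω i = s i}).toReal
        = (if s 0 = s₀ then (1 : ℝ) else 0) * ∏ i ∈ range n, P (s i) (s (i + 1)))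
    (τ : (ℕ → S) → ℕ)
    (hτ : ∀ ω, τ ω = sInf {t : ℕ | 1 ≤ t ∧ ω t = s₀})
    (hτfin : ∀ᵐ ω ∂μ, ∃ t : ℕ, 1 ≤ t ∧ ω t = s₀)
    (J R T : ℝ)
    (hJ : J = ∫ ω, (∑' t : ℕ, γ ^ t * r (ω t) (ω (t + 1))) ∂μ)
    (hR : R = ∫ ω, (∑ t ∈ range (τ ω), γ ^ t * r (ω t) (ω (t + 1))) ∂μ)
    (hT : T = ∫ ω, (∑ t ∈ range (τ ω), γ ^ t) ∂μ) :
    0 < T ∧ J = R / ((1 - γ) * T) :=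
  renewal_relationship_discounted_general P hP0 hP1 r γ hγ s₀ μ hμ τ hτ hτfin J R T hJ hR hT
end

section
/- Finite-horizon likelihood-ratio policy-gradient identity (the core of Proposition 2). Let S and A be nonempty finite types, let P : S → A → S → ℝ satisfy P(s, a, s') ≥ 0 and ∑_{s'} P(s, a, s') = 1 for all s, a, and let π : ℝ → S → A → ℝ be a parameterized policy such that for all s, a the map θ' ↦ π(θ', s, a) is differentiable at θ, π(θ, s, a) > 0, and ∑_a π(θ', s, a) = 1 in a neighborhood of θ. Fix a horizon H ≥ 1, a start state s₀ ∈ S, a reward r : S → A → S → ℝ, and γ ∈ (0,1]. For a path ω = (s₀, a₀, s₁, a₁, …, a_{H−1}, s_H) with the given initial state, let P_θ(ω) = ∏_{t=0}^{H−1} π(θ, s_t, a_t) P(s_t, a_t, s_{t+1}), and let Λ_σ(ω) = d/dθ' [log π(θ', s_σ, a_σ)]|_{θ'=θ}. Then the map θ' ↦ ∑_ω P_{θ'}(ω) ∑_{t=0}^{H−1} γ^t r(s_t, a_t, s_{t+1}) is differentiable at θ with derivative ∑_ω P_θ(ω) ∑_{σ=0}^{H−1} Λ_σ(ω) ∑_{t=σ}^{H−1}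 γ^t r(s_t, a_t, s_{t+1}). -/
/-!
Only the policy factors of the path probability `P_θ(ω) = ∏ₜ π(θ, sₜ, aₜ) P(sₜ, aₜ, sₜ₊₁)` depend
on `θ`, and they are positive at `θ`, so its derivative is `P_θ(ω) ∑_σ Λ_σ(ω)`. This gives the
policy gradient with the full return in place of the reward-to-go. The rewards collected before
time `σ` then drop out: they are determined by the path up to `s_σ`, the later steps sum out
because their probabilities sum to one, and what remains is the conditional mean
`∑ₐ π(θ, s_σ, a) Λ = ∑ₐ ∂_θ π(θ, s_σ, a)` of the score, which vanishes because the policy stays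
normalized near `θ`.
-/

open Finset

/-- The state at time `t` along the path `(s₀, a₀, s₁, a₁, …, a_{H−1}, s_H)`
encoded by the start state `s₀` and the tuple `ω : Fin H → A × S` of
action–next-state pairs: `st s₀ ω 0 = s₀` and `st s₀ ω (t+1)` is the state
component of `ω t` for `t < H` (junk value `s₀` beyond the horizon). -/
def st {S A : Type*} (s₀ : S) {H : ℕ} (ω : Fin H → A × S) (t : ℕ) : S :=
  if h : 0 < t ∧ t - 1 < H then (ω ⟨t - 1, h.2⟩).2 else s₀

/-- The action at time `t` along the path encoded by `ω : Fin H → A × S`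
(junk value beyond the horizon). -/
noncomputable def ac {S A : Type*} [Nonempty A] {H : ℕ}
    (ω : Fin H → A × S) (t : ℕ) : A :=
  if h : t < H then (ω ⟨t, h⟩).1 else Classical.arbitrary A

section Trajectory

variable {S A : Type*} {m n : ℕ}

theorem st_take (s₀ : S) (h : m ≤ n) (ω : Fin n → A × S) {t : ℕ} (ht : t ≤ m) :
    st s₀ (Fin.take m h ω) t = st s₀ ω t := by
  unfold st
  by_cases h0 : 0 < t
  · rw [dif_pos ⟨h0, by omega⟩, dif_pos ⟨h0, by omega⟩]
    rfl
  · rw [dif_neg (by omega), dif_neg (by omega)]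

theorem ac_take [Nonempty A] (h : m ≤ n) (ω : Fin n → A × S) {t : ℕ} (ht : t < m) :
    ac (Fin.take m h ω) t = ac ω t := by
  rw [ac, ac, dif_pos ht, dif_pos (by omega)]
  rfl

theorem st_snoc (s₀ : S) (ω : Fin n → A × S) (x : A × S) {t : ℕ} (ht : t ≤ n) :
    st s₀ (Fin.snoc ω x : Fin (n + 1) → A × S) t = st s₀ ω t := by
  rw [← st_take s₀ n.le_succ _ ht, Fin.take_eq_init, Fin.init_snoc]

theorem st_snoc_last (s₀ : S) (ω : Fin n → A × S) (x : A × S) :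
    st s₀ (Fin.snoc ω x : Fin (n + 1) → A × S) (n + 1) = x.2 := by
  rw [st, dif_pos ⟨n.succ_pos, by omega⟩]
  exact congrArg Prod.snd (Fin.snoc_last (α := fun _ => A × S) x ω)

theorem ac_snoc_last [Nonempty A] (ω : Fin n → A × S) (x : A × S) :
    ac (Fin.snoc ω x : Fin (n + 1) → A × S) n = x.1 := by
  rw [ac, dif_pos n.lt_succ_self]
  exact congrArg Prod.fst (Fin.snoc_last (α := fun _ => A × S) x ω)

end Trajectory

section LogDeriv

variable {ι : Type*} (s : Finset ι) {f : ι → ℝ → ℝ} {x : ℝ}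

theorem hasDerivAt_prod_mul_sum_deriv_log (hf : ∀ i ∈ s, DifferentiableAt ℝ (f i) x)
    (hf0 : ∀ i ∈ s, f i x ≠ 0) :
    HasDerivAt (fun y => ∏ i ∈ s, f i y)
      ((∏ i ∈ s, f i x) * ∑ i ∈ s, deriv (fun y => Real.log (f i y)) x) x := by
  have hlog : ∑ i ∈ s, deriv (fun y => Real.log (f i y)) x = logDeriv (∏ i ∈ s, f i ·) x := by
    rw [logDeriv_prod hf0 hf]
    exact sum_congr rfl fun i hi => Real.deriv_log_comp_eq_logDeriv (hf i hi) (hf0 i hi)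
  rw [hlog, logDeriv_apply, mul_div_cancel₀ _ (prod_ne_zero_iff.mpr hf0)]
  exact (DifferentiableAt.fun_finsetProd hf).hasDerivAt

theorem sum_mul_deriv_log_eq_zero (hf : ∀ i ∈ s, DifferentiableAt ℝ (f i) x)
    (hf0 : ∀ i ∈ s, f i x ≠ 0) {c : ℝ} (hsum : ∀ᶠ y in nhds x, ∑ i ∈ s, f i y = c) :
    ∑ i ∈ s, f i x * deriv (fun y => Real.log (f i y)) x = 0 := by
  calc ∑ i ∈ s, f i x * deriv (fun y => Real.log (f i y)) x = ∑ i ∈ s, deriv (f i) x :=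
        sum_congr rfl fun i hi => by
          rw [deriv.log (hf i hi) (hf0 i hi), mul_div_cancel₀ _ (hf0 i hi)]
    _ = deriv (fun y => ∑ i ∈ s, f i y) x := (deriv_fun_sum hf).symm
    _ = 0 := by
      rw [Filter.EventuallyEq.deriv_eq (f := fun _ => c) hsum, deriv_const]

end LogDeriv

section PathWeight

variable {S A : Type*} [Nonempty A] (p : S → A → ℝ) (P : S → A → S → ℝ) (s₀ : S)

noncomputable def pathWeight {n : ℕ} (ω : Fin n → A × S) : ℝ :=
  ∏ t ∈ range n, p (st s₀ ω t) (ac ω t) * P (st s₀ ω t) (ac ω t) (st s₀ ω (t + 1))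

theorem pathWeight_succ {n : ℕ} (ω : Fin (n + 1) → A × S) :
    pathWeight p P s₀ ω = pathWeight p P s₀ (Fin.init ω) *
      (p (st s₀ ω n) (ac ω n) * P (st s₀ ω n) (ac ω n) (st s₀ ω (n + 1))) := by
  rw [pathWeight, prod_range_succ, pathWeight, ← Fin.take_eq_init]
  congr 1
  refine prod_congr rfl fun t ht => ?_
  have ht : t < n := mem_range.mp ht
  rw [st_take _ _ _ ht.le, st_take _ _ _ ht, ac_take _ _ ht]

theorem hasDerivAt_pathWeight {π : ℝ → S → A → ℝ} {θ : ℝ}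
    (hπ : ∀ s a, DifferentiableAt ℝ (fun θ' => π θ' s a) θ) (hπ0 : ∀ s a, π θ s a ≠ 0)
    {n : ℕ} (ω : Fin n → A × S) :
    HasDerivAt (fun θ' => pathWeight (π θ') P s₀ ω)
      (pathWeight (π θ) P s₀ ω *
        ∑ σ ∈ range n, deriv (fun θ' => Real.log (π θ' (st s₀ ω σ) (ac ω σ))) θ) θ := by
  simp only [pathWeight, prod_mul_distrib]
  refine ((hasDerivAt_prod_mul_sum_deriv_log (range n)
    (f := fun t θ' => π θ' (st s₀ ω t) (ac ω t)) (fun t _ => hπ _ _) (fun t _ => hπ0 _ _)).mul_const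
    (∏ t ∈ range n, P (st s₀ ω t) (ac ω t) (st s₀ ω (t + 1)))).congr_deriv ?_
  ring

variable [Fintype S] [Fintype A]

theorem sum_pathWeight_succ (hP : ∀ s a, ∑ s', P s a s' = 1) {n : ℕ}
    (F : (Fin n → A × S) → ℝ) (G : S → A → ℝ) :
    ∑ ω : Fin (n + 1) → A × S, pathWeight p P s₀ ω * (F (Fin.init ω) * G (st s₀ ω n) (ac ω n)) =
      ∑ ω : Fin n → A × S,
        pathWeight p P s₀ ω * (F ω * ∑ a, p (st s₀ ω n) a * G (st s₀ ω n) a) := by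
  rw [← (Fin.snocEquiv fun _ => A × S).sum_comp, Fintype.sum_prod_type_right]
  refine sum_congr rfl fun ω _ => ?_
  simp only [show ∀ y, Fin.snocEquiv (fun _ => A × S) y = Fin.snoc y.2 y.1 from fun _ => rfl,
    pathWeight_succ, Fin.init_snoc, st_snoc _ _ _ le_rfl,
    st_snoc_last, ac_snoc_last, Fintype.sum_prod_type, mul_sum]
  refine sum_congr rfl fun a _ => ?_
  rw [← sum_mul, ← mul_sum, ← mul_sum, hP]
  ring

theorem sum_pathWeight_mul_take (hp : ∀ s, ∑ a, p s a = 1) (hP : ∀ s a, ∑ s', P s a s' = 1)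
    {m n : ℕ} (h : m ≤ n) (f : (Fin m → A × S) → ℝ) :
    ∑ ω : Fin n → A × S, pathWeight p P s₀ ω * f (Fin.take m h ω) =
      ∑ ω : Fin m → A × S, pathWeight p P s₀ ω * f ω := by
  induction n, h using Nat.le_induction with
  | base => simp only [Fin.take_eq_self]
  | succ n hmn ih =>
    have hstep := sum_pathWeight_succ p P s₀ hP (fun ω => f (Fin.take m hmn ω)) (fun _ _ => 1)
    simp only [Fin.take_init, mul_one, hp] at hstep
    rw [hstep, ih]

theorem sum_pathWeight_mul_past_mul_score_eq_zero (hp : ∀ s, ∑ a, p s a = 1)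
    (hP : ∀ s a, ∑ s', P s a s' = 1) (Φ : S → A → ℝ) (hΦ : ∀ s, ∑ a, p s a * Φ s a = 0)
    {σ n : ℕ} (hσ : σ < n) (C : (Fin σ → A × S) → ℝ) :
    ∑ ω : Fin n → A × S, pathWeight p P s₀ ω * (C (Fin.take σ hσ.le ω) * Φ (st s₀ ω σ) (ac ω σ)) =
      0 := by
  calc _ = ∑ ω : Fin (σ + 1) → A × S,
          pathWeight p P s₀ ω * (C (Fin.init ω) * Φ (st s₀ ω σ) (ac ω σ)) := by
        rw [← sum_pathWeight_mul_take p P s₀ hp hP hσ]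
        simp only [← Fin.take_eq_init, Fin.take_take, st_take _ _ _ σ.le_succ,
          ac_take _ _ σ.lt_succ_self]
    _ = 0 := by simp only [sum_pathWeight_succ p P s₀ hP, hΦ, mul_zero, sum_const_zero]

theorem sum_pathWeight_mul_sum_score_mul_sum_eq_sum_Ico (hp : ∀ s, ∑ a, p s a = 1)
    (hP : ∀ s a, ∑ s', P s a s' = 1) (Φ : S → A → ℝ) (hΦ : ∀ s, ∑ a, p s a * Φ s a = 0)
    (g : ℕ → S → A → S → ℝ) (n : ℕ) :
    ∑ ω : Fin n → A × S, pathWeight p P s₀ ω * (∑ σ ∈ range n, Φ (st s₀ ω σ) (ac ω σ)) *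
        ∑ t ∈ range n, g t (st s₀ ω t) (ac ω t) (st s₀ ω (t + 1)) =
      ∑ ω : Fin n → A × S, pathWeight p P s₀ ω * ∑ σ ∈ range n, Φ (st s₀ ω σ) (ac ω σ) *
        ∑ t ∈ Ico σ n, g t (st s₀ ω t) (ac ω t) (st s₀ ω (t + 1)) := by
  have hpast : ∑ ω : Fin n → A × S, pathWeight p P s₀ ω * ∑ σ ∈ range n,
      (∑ t ∈ range σ, g t (st s₀ ω t) (ac ω t) (st s₀ ω (t + 1))) * Φ (st s₀ ω σ) (ac ω σ) = 0 := by
    simp_rw [mul_sum]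
    rw [sum_comm]
    refine sum_eq_zero fun σ hσ => ?_
    have hσ : σ < n := mem_range.mp hσ
    rw [← sum_pathWeight_mul_past_mul_score_eq_zero p P s₀ hp hP Φ hΦ hσ
      (fun ω => ∑ t ∈ range σ, g t (st s₀ ω t) (ac ω t) (st s₀ ω (t + 1)))]
    refine sum_congr rfl fun ω _ => ?_
    congr 2
    refine sum_congr rfl fun t ht => ?_
    have ht : t < σ := mem_range.mp ht
    rw [st_take _ _ _ ht.le, st_take _ _ _ ht, ac_take _ _ ht]
  rw [← sub_eq_zero, ← sum_sub_distrib, ← hpast]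
  refine sum_congr rfl fun ω _ => ?_
  rw [mul_assoc, ← mul_sub, sum_mul, ← sum_sub_distrib]
  congr 1
  refine sum_congr rfl fun σ hσ => ?_
  rw [← sum_range_add_sum_Ico _ (mem_range.mp hσ).le]
  ring

end PathWeight

theorem likelihood_ratio_policy_gradient_general
    {S A : Type*} [Fintype S] [Fintype A] [Nonempty A]
    (P : S → A → S → ℝ)
    (hP1 : ∀ s a, ∑ s', P s a s' = 1)
    (π : ℝ → S → A → ℝ) (θ : ℝ)
    (hπdiff : ∀ s a, DifferentiableAt ℝ (fun θ' => π θ' s a) θ)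
    (hπpos : ∀ s a, 0 < π θ s a)
    (hπsum : ∀ᶠ θ' in nhds θ, ∀ s, ∑ a, π θ' s a = 1)
    (H : ℕ) (s₀ : S) (r : S → A → S → ℝ)
    (γ : ℝ) :
    HasDerivAt
      (fun θ' => ∑ ω : Fin H → A × S,
        (∏ t ∈ range H, π θ' (st s₀ ω t) (ac ω t)
            * P (st s₀ ω t) (ac ω t) (st s₀ ω (t + 1)))
          * ∑ t ∈ range H, γ ^ t * r (st s₀ ω t) (ac ω t) (st s₀ ω (t + 1)))
      (∑ ω : Fin H → A × S,
        (∏ t ∈ range H, π θ (st s₀ ω t) (ac ω t)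
            * P (st s₀ ω t) (ac ω t) (st s₀ ω (t + 1)))
          * ∑ σ ∈ range H,
              (deriv (fun θ' => Real.log (π θ' (st s₀ ω σ) (ac ω σ))) θ)
                * ∑ t ∈ Finset.Ico σ H,
                    γ ^ t * r (st s₀ ω t) (ac ω t) (st s₀ ω (t + 1)))
      θ := by
  have hπ0 : ∀ s a, π θ s a ≠ 0 := fun s a => (hπpos s a).ne'
  have hscore : ∀ s, ∑ a, π θ s a * deriv (fun θ' => Real.log (π θ' s a)) θ = 0 := fun s =>
    sum_mul_deriv_log_eq_zero univ (fun a _ => hπdiff s a) (fun a _ => hπ0 s a)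
      (hπsum.mono fun _ h => h s)
  have hderiv := HasDerivAt.fun_sum (u := univ) fun (ω : Fin H → A × S) _ =>
    (hasDerivAt_pathWeight P s₀ hπdiff hπ0 ω).mul_const
      (∑ t ∈ range H, γ ^ t * r (st s₀ ω t) (ac ω t) (st s₀ ω (t + 1)))
  rwa [sum_pathWeight_mul_sum_score_mul_sum_eq_sum_Ico (π θ) P s₀ hπsum.self_of_nhds hP1 _ hscore
    (fun t s a s' => γ ^ t * r s a s')] at hderiv

/-- **Finite-horizon likelihood-ratio policy-gradient identity (Proposition 2, core).**
For a finite MDP with transition probabilities `P`, a parameterized policy `π`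
that is differentiable and positive at `θ` and properly normalized near `θ`,
horizon `H ≥ 1`, start state `s₀`, reward `r` and discount `γ ∈ (0,1]`, the map
`θ' ↦ ∑_ω P_{θ'}(ω) ∑_{t<H} γ^t r(s_t, a_t, s_{t+1})` is differentiable at `θ`
with derivative
`∑_ω P_θ(ω) ∑_{σ<H} Λ_σ(ω) ∑_{t=σ}^{H−1} γ^t r(s_t, a_t, s_{t+1})`, where
`P_θ(ω) = ∏_{t<H} π(θ, s_t, a_t) P(s_t, a_t, s_{t+1})` and
`Λ_σ(ω) = d/dθ' log π(θ', s_σ, a_σ) |_{θ'=θ}`. -/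
theorem likelihood_ratio_policy_gradient
    {S A : Type*} [Fintype S] [Nonempty S] [Fintype A] [Nonempty A]
    (P : S → A → S → ℝ)
    (hP0 : ∀ s a s', 0 ≤ P s a s') (hP1 : ∀ s a, ∑ s', P s a s' = 1)
    (π : ℝ → S → A → ℝ) (θ : ℝ)
    (hπdiff : ∀ s a, DifferentiableAt ℝ (fun θ' => π θ' s a) θ)
    (hπpos : ∀ s a, 0 < π θ s a)
    (hπsum : ∀ᶠ θ' in nhds θ, ∀ s, ∑ a, π θ' s a = 1)
    (H : ℕ) (hH : 1 ≤ H) (s₀ : S) (r : S → A → S → ℝ)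
    (γ : ℝ) (hγ : γ ∈ Set.Ioc (0 : ℝ) 1) :
    HasDerivAt
      (fun θ' => ∑ ω : Fin H → A × S,
        (∏ t ∈ range H, π θ' (st s₀ ω t) (ac ω t)
            * P (st s₀ ω t) (ac ω t) (st s₀ ω (t + 1)))
          * ∑ t ∈ range H, γ ^ t * r (st s₀ ω t) (ac ω t) (st s₀ ω (t + 1)))
      (∑ ω : Fin H → A × S,
        (∏ t ∈ range H, π θ (st s₀ ω t) (ac ω t)
            * P (st s₀ ω t) (ac ω t) (st s₀ ω (t + 1)))
          * ∑ σ ∈ range H,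
              (deriv (fun θ' => Real.log (π θ' (st s₀ ω σ) (ac ω σ))) θ)
                * ∑ t ∈ Finset.Ico σ H,
                    γ ^ t * r (st s₀ ω t) (ac ω t) (st s₀ ω (t + 1)))
      θ :=
  likelihood_ratio_policy_gradient_general P hP1 π θ hπdiff hπpos hπsum H s₀ r γ
end

section
/- Algebraic error bound of approximate RMC (the core inequality of Theorem 2). Let γ ∈ (0,1), L ≥ 0, ρ ≥ 0, and let T̄, J, R, V be real numbers with 0 ≤ T̄ ≤ γ, J = R + T̄ · V, and |J − V| ≤ L ρ. Define T = (1 − T̄)/(1 − γ) and J^ρ = R / ((1 − γ) T). Then T ≥ 1 and |J − J^ρ| ≤ L T̄ ρ / ((1 − γ) T) ≤ γ L ρ / (1 − γ). -/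
/-- **Algebraic error bound of approximate RMC (core inequality of Theorem 2).**
Let `γ ∈ (0,1)`, `L ≥ 0`, `ρ ≥ 0`, and let `T̄, J, R, V` be reals with
`0 ≤ T̄ ≤ γ`, `J = R + T̄ * V` and `|J − V| ≤ L * ρ`. With
`T = (1 − T̄)/(1 − γ)` and `Jρ = R / ((1 − γ) * T)` we have `T ≥ 1` and
`|J − Jρ| ≤ L * T̄ * ρ / ((1 − γ) * T) ≤ γ * L * ρ / (1 − γ)`. -/
theorem approximate_rmc_error_bound
    (γ L ρ Tbar J R V : ℝ)
    (hγ : γ ∈ Set.Ioo (0 : ℝ) 1) (hL : 0 ≤ L) (hρ : 0 ≤ ρ)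
    (hTbar₀ : 0 ≤ Tbar) (hTbarγ : Tbar ≤ γ)
    (hJ : J = R + Tbar * V) (hJV : |J - V| ≤ L * ρ)
    (T Jρ : ℝ) (hT : T = (1 - Tbar) / (1 - γ)) (hJρ : Jρ = R / ((1 - γ) * T)) :
    1 ≤ T ∧ |J - Jρ| ≤ L * Tbar * ρ / ((1 - γ) * T) ∧
      L * Tbar * ρ / ((1 - γ) * T) ≤ γ * L * ρ / (1 - γ) := by
  obtain ⟨hγ0, hγ1⟩ := hγ
  have h1γ : (0:ℝ) < 1 - γ := by linarith
  have hTb1 : (0:ℝ) < 1 - Tbar := by linarith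
  have hkey : (1 - γ) * T = 1 - Tbar := by
    rw [hT]; field_simp
  have hT1 : 1 ≤ T := by
    rw [hT, le_div_iff₀ h1γ]; linarith
  refine ⟨hT1, ?_, ?_⟩
  · have hJρ' : Jρ = (J - Tbar * V) / (1 - Tbar) := by
      rw [hJρ, hkey, hJ]; ring_nf
    have hdiff : J - Jρ = Tbar * (V - J) / (1 - Tbar) := by
      rw [hJρ']; field_simp; ring
    rw [hdiff, hkey, abs_div, abs_of_pos hTb1, abs_mul, abs_of_nonneg hTbar₀,
      div_le_div_iff₀ hTb1 hTb1]
    have : |V - J| ≤ L * ρ := by rwa [abs_sub_comm]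
    nlinarith [mul_le_mul_of_nonneg_left this hTbar₀]
  · rw [hkey, div_le_div_iff₀ hTb1 h1γ]
    nlinarith [mul_nonneg (mul_nonneg hL hρ) (sub_nonneg.mpr hTbarγ)]
end

section
/- Approximate renewal relationship (Theorem 2, closed-loop finite-state form). Let S be a nonempty finite state space equipped with a metric d, P a Markov kernel from S to S (the closed-loop transition kernel under a fixed stationary policy), r : S × S → ℝ, γ ∈ (0,1), s₀ ∈ S, and ρ > 0. Let B = {s ∈ S : d(s, s₀) ≤ ρ}. For each s ∈ S define the value V(s) = E[∑_{t=0}^∞ γ^t r(X_t, X_{t+1})] under the trajectory law of the chain started at s. Under the trajectory law from s₀, let τ = inf{t ≥ 1 : X_t ∈ B}, and assume τ < ∞ almost surely; define R^ρ = E[∑_{t=0}^{τ−1} γ^t r(X_t, X_{t+1})], T^ρ = E[∑_{t=0}^{τ−1} γ^t], and T̄^ρ = E[γ^τ]. Suppose there exists L ≥ 0 such that |V(s) − V(s')| ≤ L d(s, s') for all s, s' ∈ B. If s₀ ∈ B, then |V(s₀) − R^ρ/((1 − γ) T^ρ)| ≤ L T̄^ρ ρ / ((1 − γ) T^ρ)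 ≤ γ L ρ / (1 − γ). -/
/-!
Splitting the discounted return at the return time `τ` to `B` and applying the strong Markov
property gives the renewal identity `V s₀ = Rρ + E[γ^τ V(X_τ)]`. As `X_τ ∈ B`, the Lipschitz
bound gives `E[γ^τ V(X_τ)] = T̄ρ V s₀ + e` with `|e| ≤ L ρ T̄ρ`, and the geometric sum
identity `1 - T̄ρ = (1 - γ) Tρ` turns this into the first estimate; the second one reduces to
`T̄ρ ≤ γ`, which holds because `τ ≥ 1`. The strong Markov property is derived from the cylinder probabilities of the
trajectory laws by uniqueness of measures on the π-system of prefix cylinders.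
-/

open scoped Classical

open MeasureTheory Finset Preorder

section NatIndexed

variable {Ω : Type*} [MeasurableSpace Ω] {τ : Ω → ℕ}

lemma measurable_of_nat_index {β : Type*} [MeasurableSpace β] (hτ : Measurable τ)
    {F : ℕ → Ω → β} (hF : ∀ n, Measurable (F n)) : Measurable fun ω => F (τ ω) ω :=
  (measurable_from_prod_countable_left (f := fun p : Ω × ℕ => F p.2 p.1) hF).comp
    (measurable_id.prodMk hτ)

lemma integrable_of_nat_index {μ : Measure Ω} [IsFiniteMeasure μ] (hτ : Measurable τ)
    {F : ℕ → Ω → ℝ} (hF : ∀ n, Measurable (F n)) {C : ℝ} (hFC : ∀ n ω, ‖F n ω‖ ≤ C) :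
    Integrable (fun ω => F (τ ω) ω) μ :=
  Integrable.of_bound (measurable_of_nat_index hτ hF).aestronglyMeasurable C
    (ae_of_all _ fun _ => hFC _ _)

end NatIndexed

lemma norm_pow_le_one {𝕜 : Type*} [NormedDivisionRing 𝕜] {a : 𝕜} (ha : ‖a‖ ≤ 1) (n : ℕ) :
    ‖a ^ n‖ ≤ 1 := by
  rw [norm_pow]
  exact pow_le_one₀ (norm_nonneg a) ha

lemma norm_integral_le_of_forall_norm_le {Ω : Type*} [MeasurableSpace Ω] {μ : Measure Ω}
    [IsProbabilityMeasure μ] {f : Ω → ℝ} {C : ℝ} (hfC : ∀ ω, ‖f ω‖ ≤ C) :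
    ‖∫ ω, f ω ∂μ‖ ≤ C := by
  simpa using norm_integral_le_of_norm_le_const (ae_of_all μ hfC)

lemma abs_integral_mul_sub_le {Ω : Type*} [MeasurableSpace Ω] {μ : Measure Ω} {w f : Ω → ℝ}
    {a K : ℝ} (hw : Integrable w μ) (hwf : Integrable (fun ω => w ω * f ω) μ)
    (hw0 : ∀ᵐ ω ∂μ, 0 ≤ w ω) (hf : ∀ᵐ ω ∂μ, |f ω - a| ≤ K) :
    |∫ ω, w ω * f ω ∂μ - (∫ ω, w ω ∂μ) * a| ≤ K * ∫ ω, w ω ∂μ := by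
  rw [← integral_mul_const, ← integral_sub hwf (hw.mul_const a), ← integral_const_mul,
    ← Real.norm_eq_abs]
  refine norm_integral_le_of_norm_le (hw.const_mul K) ?_
  filter_upwards [hw0, hf] with ω hw0 hf
  rw [← mul_sub, norm_mul, Real.norm_of_nonneg hw0, Real.norm_eq_abs, mul_comm K]
  exact mul_le_mul_of_nonneg_left hf hw0

section PrefixCylinder

variable {S : Type*}

def prefixCylinder (x : ℕ → S) (n : ℕ) : Set (ℕ → S) := {ω | ∀ i ≤ n, ω i = x i}

lemma prefixCylinder_eq_preimage_frestrictLe (x : ℕ → S) (n : ℕ) :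
    prefixCylinder x n = frestrictLe (π := fun _ => S) n ⁻¹' {frestrictLe n x} := by
  ext ω
  simp [prefixCylinder, funext_iff]

lemma prefixCylinder_eq_of_mem {x ω : ℕ → S} {n : ℕ} (h : ω ∈ prefixCylinder x n) :
    prefixCylinder ω n = prefixCylinder x n := by
  ext ω'
  exact forall₂_congr fun i hi => by rw [h i hi]

lemma prefixCylinder_inter_prefixCylinder (x : ℕ → S) (n m : ℕ) :
    prefixCylinder x n ∩ prefixCylinder x m = prefixCylinder x (max n m) := by
  ext ω
  simp only [prefixCylinder, Set.mem_inter_iff, Set.mem_ofPred_eq, le_max_iff, or_imp, forall_and]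

lemma isPiSystem_prefixCylinder :
    IsPiSystem {C : Set (ℕ → S) | ∃ x n, C = prefixCylinder x n} := by
  rintro _ ⟨x, n, rfl⟩ _ ⟨y, m, rfl⟩ ⟨ω, hx, hy⟩
  rw [← prefixCylinder_eq_of_mem hx, ← prefixCylinder_eq_of_mem hy,
    prefixCylinder_inter_prefixCylinder]
  exact ⟨ω, _, rfl⟩

lemma iUnion_inter_preimage_frestrictLe (A : Set (ℕ → S)) (n : ℕ) :
    ⋃ y : Π _ : Iic n, S, A ∩ frestrictLe (π := fun _ => S) n ⁻¹' {y} = A := by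
  rw [← Set.inter_iUnion, ← Set.preimage_iUnion, Set.iUnion_singleton_eq_range, Set.range_id',
    Set.preimage_univ, Set.inter_univ]

variable [MeasurableSpace S]

lemma prefixCylinder_subset_of_measurableSet_piLE {A : Set (ℕ → S)} {n : ℕ}
    (hA : MeasurableSet[Filtration.piLE n] A) {x : ℕ → S} (hx : x ∈ A) :
    prefixCylinder x n ⊆ A := by
  rw [Filtration.piLE_eq_comap_frestrictLe] at hA
  obtain ⟨A', -, rfl⟩ := hA
  intro ω hω
  rw [prefixCylinder_eq_preimage_frestrictLe] at hω
  rwa [Set.mem_preimage, Set.eq_of_mem_singleton hω]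

lemma inter_preimage_frestrictLe_eq {A : Set (ℕ → S)} {n : ℕ}
    (hA : MeasurableSet[Filtration.piLE n] A) (y : Π _ : Iic n, S) :
    A ∩ frestrictLe n ⁻¹' {y} = ∅ ∨ ∃ x, A ∩ frestrictLe n ⁻¹' {y} = prefixCylinder x n := by
  refine (A ∩ frestrictLe n ⁻¹' {y}).eq_empty_or_nonempty.imp id fun ⟨x, hxA, hxy⟩ => ⟨x, ?_⟩
  rw [← hxy, ← prefixCylinder_eq_preimage_frestrictLe]
  exact Set.inter_eq_right.2 (prefixCylinder_subset_of_measurableSet_piLE hA hxA)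

variable [Countable S] [MeasurableSingletonClass S]

lemma measurableSet_piLE_of_forall_eq {A : Set (ℕ → S)} {n : ℕ}
    (hA : ∀ ω ω', (∀ i ≤ n, ω i = ω' i) → ω ∈ A → ω' ∈ A) :
    MeasurableSet[Filtration.piLE n] A := by
  rw [Filtration.piLE_eq_comap_frestrictLe]
  refine ⟨frestrictLe n '' A, .of_discrete, Set.ext fun ω => ⟨?_, fun h => ⟨ω, h, rfl⟩⟩⟩
  rintro ⟨ω', hω', heq⟩
  exact hA ω' ω (fun i hi => congrFun heq ⟨i, mem_Iic.2 hi⟩) hω'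

lemma measurableSet_prefixCylinder (x : ℕ → S) (n : ℕ) : MeasurableSet (prefixCylinder x n) :=
  Filtration.le _ n _ <| measurableSet_piLE_of_forall_eq fun _ _ heq hω i hi =>
    (heq i hi).symm.trans (hω i hi)

lemma generateFrom_prefixCylinder :
    MeasurableSpace.generateFrom {C : Set (ℕ → S) | ∃ x n, C = prefixCylinder x n} =
      MeasurableSpace.pi := by
  refine le_antisymm (MeasurableSpace.generateFrom_le ?_) (iSup_le fun n => ?_)
  · rintro _ ⟨x, n, rfl⟩
    exact measurableSet_prefixCylinder x n
  have h_eval : Measurable[Filtration.piLE n] fun ω : ℕ → S => ω n := by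
    rw [Filtration.piLE_eq_comap_frestrictLe]
    exact (measurable_pi_apply (X := fun _ : Iic n => S) ⟨n, mem_Iic.2 le_rfl⟩).comp
      (comap_measurable _)
  refine h_eval.comap_le.trans fun A hA => ?_
  rw [← iUnion_inter_preimage_frestrictLe A n]
  refine @MeasurableSet.iUnion _ _ (_) _ _ fun y => ?_
  rcases inter_preimage_frestrictLe_eq hA y with h | ⟨x, h⟩
  · exact h ▸ @MeasurableSet.empty _ (_)
  · exact h ▸ MeasurableSpace.measurableSet_generateFrom ⟨x, n, rfl⟩

lemma setIntegral_eq_of_forall_prefixCylinder {μ : Measure (ℕ → S)} {f g : (ℕ → S) → ℝ}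
    {A : Set (ℕ → S)} {n : ℕ} (hA : MeasurableSet[Filtration.piLE n] A)
    (hf : IntegrableOn f A μ) (hg : IntegrableOn g A μ)
    (hfg : ∀ x, ∫ ω in prefixCylinder x n, f ω ∂μ = ∫ ω in prefixCylinder x n, g ω ∂μ) :
    ∫ ω in A, f ω ∂μ = ∫ ω in A, g ω ∂μ := by
  have h_meas (y : Π _ : Iic n, S) : MeasurableSet (A ∩ frestrictLe n ⁻¹' {y}) :=
    (Filtration.le _ n _ hA).inter (measurable_frestrictLe n (measurableSet_singleton y))
  have h_disj : Pairwise (Function.onFun Disjoint fun y => A ∩ frestrictLe n ⁻¹' {y}) :=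
    fun y y' hne => ((Set.disjoint_singleton.2 hne).preimage _).mono
      Set.inter_subset_right Set.inter_subset_right
  rw [← iUnion_inter_preimage_frestrictLe A n] at hf hg ⊢
  rw [integral_iUnion h_meas h_disj hf, integral_iUnion h_meas h_disj hg]
  refine tsum_congr fun y => ?_
  rcases inter_preimage_frestrictLe_eq hA y with h | ⟨x, h⟩ <;> rw [h]
  · simp
  · exact hfg x

end PrefixCylinder

section Trajectory

variable {S : Type*}

def pathShift (k : ℕ) (ω : ℕ → S) : ℕ → S := fun t => ω (k + t)

def pathConcat (x : ℕ → S) (k : ℕ) (y : ℕ → S) : ℕ → S := fun i => if i ≤ k then x i else y (i - k)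

lemma pathConcat_of_le {x y : ℕ → S} {k i : ℕ} (h : i ≤ k) : pathConcat x k y i = x i :=
  if_pos h

lemma pathConcat_add {x y : ℕ → S} {k : ℕ} (hxy : y 0 = x k) (i : ℕ) :
    pathConcat x k y (k + i) = y i := by
  rcases i.eq_zero_or_pos with rfl | hi
  · exact (pathConcat_of_le le_rfl).trans hxy.symm
  · simp [pathConcat, hi.ne']

lemma preimage_pathShift_inter_prefixCylinder {x y : ℕ → S} {k : ℕ} (hxy : y 0 = x k) (n : ℕ) :
    pathShift k ⁻¹' prefixCylinder y n ∩ prefixCylinder x k =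
      prefixCylinder (pathConcat x k y) (k + n) := by
  ext ω
  refine ⟨fun ⟨hy, hx⟩ i hi => ?_, fun h => ⟨fun j hj => ?_, fun i hi => ?_⟩⟩
  · rcases le_or_gt i k with hik | hki
    · rw [pathConcat_of_le hik, hx i hik]
    · obtain ⟨j, rfl⟩ := Nat.exists_eq_add_of_le hki.le
      rw [pathConcat_add hxy, ← hy j (by omega)]
      rfl
  · rw [← pathConcat_add hxy]
    exact h (k + j) (by omega)
  · rw [h i (by omega), pathConcat_of_le hi]

lemma preimage_pathShift_inter_prefixCylinder_of_ne {x y : ℕ → S} {k : ℕ} (hxy : y 0 ≠ x k)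
    (n : ℕ) : pathShift k ⁻¹' prefixCylinder y n ∩ prefixCylinder x k = ∅ :=
  Set.eq_empty_of_forall_notMem fun _ ⟨hy, hx⟩ => hxy ((hy 0 n.zero_le).symm.trans (hx k le_rfl))

variable [MeasurableSpace S]

lemma measurable_pathShift (k : ℕ) : Measurable (pathShift (S := S) k) :=
  measurable_pi_lambda _ fun _ => measurable_pi_apply _

def IsTrajectoryLaw (P : S → S → ℝ) (μ : S → Measure (ℕ → S)) : Prop :=
  ∀ s n x, (μ s (prefixCylinder x n)).toReal =
    (if x 0 = s then (1 : ℝ) else 0) * ∏ i ∈ range n, P (x i) (x (i + 1))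

variable {P : S → S → ℝ} {μ : S → Measure (ℕ → S)}

namespace IsTrajectoryLaw

lemma measure_prefixCylinder_of_ne (hμ : IsTrajectoryLaw P μ) [∀ s, IsFiniteMeasure (μ s)]
    {s : S} {x : ℕ → S} (h : x 0 ≠ s) (n : ℕ) : μ s (prefixCylinder x n) = 0 := by
  have := hμ s n x
  rw [if_neg h, zero_mul, ENNReal.toReal_eq_zero_iff] at this
  exact this.resolve_right (measure_ne_top _ _)

lemma measure_prefixCylinder_pathConcat (hμ : IsTrajectoryLaw P μ) [∀ s, IsFiniteMeasure (μ s)]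
    (s : S) {x y : ℕ → S} {k : ℕ} (hxy : y 0 = x k) (n : ℕ) :
    μ s (prefixCylinder (pathConcat x k y) (k + n)) =
      μ s (prefixCylinder x k) * μ (x k) (prefixCylinder y n) := by
  rw [← ENNReal.toReal_eq_toReal_iff' (measure_ne_top _ _)
    (ENNReal.mul_ne_top (measure_ne_top _ _) (measure_ne_top _ _)), ENNReal.toReal_mul, hμ, hμ,
    hμ, if_pos hxy, prod_range_add, pathConcat_of_le k.zero_le]
  have h_init : ∀ i ∈ range k, P (pathConcat x k y i) (pathConcat x k y (i + 1)) =
      P (x i) (x (i + 1)) := fun i hi => by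
    rw [pathConcat_of_le (mem_range.1 hi).le, pathConcat_of_le (mem_range.1 hi)]
  have h_tail : ∀ i ∈ range n, P (pathConcat x k y (k + i)) (pathConcat x k y (k + i + 1)) =
      P (y i) (y (i + 1)) := fun i _ => by
    rw [add_assoc, pathConcat_add hxy, pathConcat_add hxy]
  rw [prod_congr rfl h_init, prod_congr rfl h_tail]
  ring

variable [Countable S] [MeasurableSingletonClass S]

lemma map_pathShift_restrict_prefixCylinder (hμ : IsTrajectoryLaw P μ)
    [∀ s, IsProbabilityMeasure (μ s)] (s : S) (x : ℕ → S) (k : ℕ) :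
    ((μ s).restrict (prefixCylinder x k)).map (pathShift k) =
      μ s (prefixCylinder x k) • μ (x k) := by
  refine ext_of_generate_finite _ generateFrom_prefixCylinder.symm isPiSystem_prefixCylinder
    ?_ ?_
  · rintro _ ⟨y, n, rfl⟩
    rw [Measure.map_apply (measurable_pathShift k) (measurableSet_prefixCylinder y n),
      Measure.restrict_apply (measurable_pathShift k (measurableSet_prefixCylinder y n)),
      Measure.smul_apply, smul_eq_mul]
    by_cases hxy : y 0 = x k
    · rw [preimage_pathShift_inter_prefixCylinder hxy, hμ.measure_prefixCylinder_pathConcat s hxy]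
    · rw [preimage_pathShift_inter_prefixCylinder_of_ne hxy, hμ.measure_prefixCylinder_of_ne hxy,
        measure_empty, mul_zero]
  · simp [Measure.map_apply (measurable_pathShift k) .univ]

lemma setIntegral_comp_pathShift_prefixCylinder (hμ : IsTrajectoryLaw P μ)
    [∀ s, IsProbabilityMeasure (μ s)] {G : (ℕ → S) → ℝ} (hG : Measurable G) (s : S)
    (x : ℕ → S) (k : ℕ) :
    ∫ ω in prefixCylinder x k, G (pathShift k ω) ∂μ s =
      (μ s).real (prefixCylinder x k) * ∫ ω, G ω ∂μ (x k) := by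
  rw [← integral_map (measurable_pathShift k).aemeasurable hG.aestronglyMeasurable,
    hμ.map_pathShift_restrict_prefixCylinder, integral_smul_measure, smul_eq_mul, measureReal_def]

theorem setIntegral_comp_pathShift (hμ : IsTrajectoryLaw P μ) [∀ s, IsProbabilityMeasure (μ s)]
    {G : (ℕ → S) → ℝ} (hG : Measurable G) {C : ℝ} (hGC : ∀ ω, ‖G ω‖ ≤ C) (s : S)
    {A : Set (ℕ → S)} {m : ℕ} (hA : MeasurableSet[Filtration.piLE m] A) :
    ∫ ω in A, G (pathShift m ω) ∂μ s = ∫ ω in A, (∫ ω', G ω' ∂μ (ω m)) ∂μ s := by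
  refine setIntegral_eq_of_forall_prefixCylinder hA ?_ ?_ fun x => ?_
  · exact (Integrable.of_bound (hG.comp (measurable_pathShift m)).aestronglyMeasurable C
      (ae_of_all _ fun ω => hGC _)).integrableOn
  · exact (Integrable.of_bound ((Measurable.of_discrete (f := fun a => ∫ ω', G ω' ∂μ a)).comp
      (measurable_pi_apply m)).aestronglyMeasurable C
      (ae_of_all _ fun _ => norm_integral_le_of_forall_norm_le hGC)).integrableOn
  · rw [hμ.setIntegral_comp_pathShift_prefixCylinder hG,
      setIntegral_congr_fun (measurableSet_prefixCylinder x m) fun ω hω => by rw [hω m le_rfl],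
      setIntegral_const, smul_eq_mul]

/-- `τ` only needs to be a stopping time on an almost sure event `U`: a return time takes the
junk value `sInf ∅ = 0` off the event that the target set is ever reached. -/
theorem integral_mul_comp_pathShift_of_stopping (hμ : IsTrajectoryLaw P μ)
    [∀ s, IsProbabilityMeasure (μ s)] {G : (ℕ → S) → ℝ} (hG : Measurable G) {C : ℝ}
    (hGC : ∀ ω, ‖G ω‖ ≤ C) {c : ℕ → ℝ} {D : ℝ} (hcD : ∀ n, ‖c n‖ ≤ D) (s : S)
    {τ : (ℕ → S) → ℕ} {U : Set (ℕ → S)} (hτ : Measurable τ)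
    (hτU : ∀ k, MeasurableSet[Filtration.piLE k] {ω | ω ∈ U ∧ τ ω = k})
    (hU : ∀ᵐ ω ∂μ s, ω ∈ U) :
    ∫ ω, c (τ ω) * G (pathShift (τ ω) ω) ∂μ s =
      ∫ ω, c (τ ω) * ∫ ω', G ω' ∂μ (ω (τ ω)) ∂μ s := by
  set E : ℕ → Set (ℕ → S) := fun k => {ω | ω ∈ U ∧ τ ω = k}
  have hE_meas (k : ℕ) : MeasurableSet (E k) := Filtration.le _ k _ (hτU k)
  have hE_disj : Pairwise (Function.onFun Disjoint E) :=
    fun k k' hne => Set.disjoint_left.2 fun ω h h' => hne (h.2.symm.trans h'.2)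
  have hE_full : (μ s).restrict (⋃ k, E k) = μ s :=
    Measure.restrict_eq_self_of_ae_mem (hU.mono fun ω hω => Set.mem_iUnion.2 ⟨τ ω, hω, rfl⟩)
  have h_int₁ : Integrable (fun ω => c (τ ω) * G (pathShift (τ ω) ω)) (μ s) :=
    integrable_of_nat_index hτ (fun n => (hG.comp (measurable_pathShift n)).const_mul (c n))
      fun n ω => norm_mul_le_of_le (hcD n) (hGC _)
  have h_int₂ : Integrable (fun ω => c (τ ω) * ∫ ω', G ω' ∂μ (ω (τ ω))) (μ s) :=
    integrable_of_nat_index (F := fun n ω => c n * ∫ ω', G ω' ∂μ (ω n)) hτ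
      (fun n => ((Measurable.of_discrete (f := fun a => ∫ ω', G ω' ∂μ a)).comp
        (measurable_pi_apply n)).const_mul (c n))
      fun n ω => norm_mul_le_of_le (hcD n) (norm_integral_le_of_forall_norm_le hGC)
  rw [← hE_full, integral_iUnion hE_meas hE_disj h_int₁.integrableOn,
    integral_iUnion hE_meas hE_disj h_int₂.integrableOn]
  refine tsum_congr fun k => ?_
  calc ∫ ω in E k, c (τ ω) * G (pathShift (τ ω) ω) ∂μ s
      = c k * ∫ ω in E k, G (pathShift k ω) ∂μ s := by
        rw [← integral_const_mul]
        exact setIntegral_congr_fun (hE_meas k) fun ω hω => by rw [hω.2]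
    _ = c k * ∫ ω in E k, (∫ ω', G ω' ∂μ (ω k)) ∂μ s := by
        rw [hμ.setIntegral_comp_pathShift hG hGC s (hτU k)]
    _ = ∫ ω in E k, c (τ ω) * ∫ ω', G ω' ∂μ (ω (τ ω)) ∂μ s := by
        rw [← integral_const_mul]
        exact setIntegral_congr_fun (hE_meas k) fun ω hω => by rw [hω.2]

end IsTrajectoryLaw

end Trajectory

section DiscountedReturn

variable {S : Type*} {γ M : ℝ} {r : S → S → ℝ}

noncomputable def discountedReturn (γ : ℝ) (r : S → S → ℝ) (ω : ℕ → S) : ℝ :=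
  ∑' t, γ ^ t * r (ω t) (ω (t + 1))

lemma norm_discountedReturn_term_le (hr : ∀ a b, ‖r a b‖ ≤ M) (ω : ℕ → S) (t : ℕ) :
    ‖γ ^ t * r (ω t) (ω (t + 1))‖ ≤ M * ‖γ‖ ^ t := by
  rw [norm_mul, norm_pow, mul_comm]
  exact mul_le_mul_of_nonneg_right (hr _ _) (by positivity)

lemma summable_discountedReturn (hr : ∀ a b, ‖r a b‖ ≤ M) (hγ : ‖γ‖ < 1) (ω : ℕ → S) :
    Summable fun t => γ ^ t * r (ω t) (ω (t + 1)) :=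
  .of_norm_bounded ((summable_geometric_of_lt_one (norm_nonneg γ) hγ).mul_left M)
    (norm_discountedReturn_term_le hr ω)

lemma norm_discountedReturn_le (hr : ∀ a b, ‖r a b‖ ≤ M) (hγ : ‖γ‖ < 1) (ω : ℕ → S) :
    ‖discountedReturn γ r ω‖ ≤ M * (1 - ‖γ‖)⁻¹ :=
  tsum_of_norm_bounded ((hasSum_geometric_of_lt_one (norm_nonneg γ) hγ).mul_left M)
    (norm_discountedReturn_term_le hr ω)

lemma discountedReturn_eq_sum_add (hr : ∀ a b, ‖r a b‖ ≤ M) (hγ : ‖γ‖ < 1) (n : ℕ)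
    (ω : ℕ → S) :
    discountedReturn γ r ω = ∑ t ∈ range n, γ ^ t * r (ω t) (ω (t + 1)) +
      γ ^ n * discountedReturn γ r (pathShift n ω) := by
  rw [discountedReturn, ← (summable_discountedReturn hr hγ ω).sum_add_tsum_nat_add n,
    discountedReturn, ← tsum_mul_left]
  congr 1
  refine tsum_congr fun t => ?_
  rw [pathShift, pathShift, show t + n = n + t by omega, show n + t + 1 = n + (t + 1) by omega,
    pow_add]
  ring

lemma measurable_discountedReturn [MeasurableSpace S] [Countable S] [MeasurableSingletonClass S]
    (γ : ℝ) (r : S → S → ℝ) : Measurable (discountedReturn γ r) :=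
  Measurable.tsum fun t => Measurable.const_mul
    (Measurable.comp (g := fun p : S × S => r p.1 p.2) (f := fun ω : ℕ → S => (ω t, ω (t + 1)))
      .of_discrete (by fun_prop)) _

theorem IsTrajectoryLaw.integral_discountedReturn_eq [MeasurableSpace S] [Countable S]
    [MeasurableSingletonClass S] {P : S → S → ℝ} {μ : S → Measure (ℕ → S)}
    (hμ : IsTrajectoryLaw P μ) [∀ s, IsProbabilityMeasure (μ s)] (hr : ∀ a b, ‖r a b‖ ≤ M)
    (hγ : ‖γ‖ < 1) (s : S) {τ : (ℕ → S) → ℕ} {U : Set (ℕ → S)} (hτ : Measurable τ)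
    (hτU : ∀ k, MeasurableSet[Filtration.piLE k] {ω | ω ∈ U ∧ τ ω = k})
    (hU : ∀ᵐ ω ∂μ s, ω ∈ U) :
    ∫ ω, discountedReturn γ r ω ∂μ s =
      ∫ ω, ∑ t ∈ range (τ ω), γ ^ t * r (ω t) (ω (t + 1)) ∂μ s +
        ∫ ω, γ ^ τ ω * ∫ ω', discountedReturn γ r ω' ∂μ (ω (τ ω)) ∂μ s := by
  have hG := measurable_discountedReturn γ r
  have hGC := norm_discountedReturn_le hr hγ
  have hpow := norm_pow_le_one hγ.le
  have h_split : (fun ω => ∑ t ∈ range (τ ω), γ ^ t * r (ω t) (ω (t + 1))) =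
      fun ω => discountedReturn γ r ω - γ ^ τ ω * discountedReturn γ r (pathShift (τ ω) ω) :=
    funext fun ω => eq_sub_of_add_eq (discountedReturn_eq_sum_add hr hγ (τ ω) ω).symm
  have h_int : Integrable (fun ω => γ ^ τ ω * discountedReturn γ r (pathShift (τ ω) ω)) (μ s) :=
    integrable_of_nat_index hτ (fun n => (hG.comp (measurable_pathShift n)).const_mul _)
      fun n ω => norm_mul_le_of_le (hpow n) (hGC _)
  rw [← hμ.integral_mul_comp_pathShift_of_stopping hG hGC hpow s hτ hτU hU, h_split,
    integral_sub (Integrable.of_bound hG.aestronglyMeasurable _ (ae_of_all _ hGC)) h_int,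
    sub_add_cancel]

end DiscountedReturn

section ReturnTime

variable {S : Type*} (B : Set S)

noncomputable def returnTime (ω : ℕ → S) : ℕ := sInf {t | 1 ≤ t ∧ ω t ∈ B}

variable {B}

lemma returnTime_spec {ω : ℕ → S} (h : ∃ t, 1 ≤ t ∧ ω t ∈ B) :
    1 ≤ returnTime B ω ∧ ω (returnTime B ω) ∈ B :=
  Nat.sInf_mem h

lemma returnTime_of_not_exists {ω : ℕ → S} (h : ¬∃ t, 1 ≤ t ∧ ω t ∈ B) : returnTime B ω = 0 :=
  Nat.sInf_eq_zero.2 (Or.inr (Set.not_nonempty_iff_eq_empty.1 h))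

lemma exists_and_returnTime_eq_iff {ω : ℕ → S} {k : ℕ} :
    (∃ t, 1 ≤ t ∧ ω t ∈ B) ∧ returnTime B ω = k ↔
      1 ≤ k ∧ ω k ∈ B ∧ ∀ j, 1 ≤ j → j < k → ω j ∉ B := by
  constructor
  · rintro ⟨h, rfl⟩
    exact ⟨(returnTime_spec h).1, (returnTime_spec h).2,
      fun j hj hjk hjB => Nat.notMem_of_lt_sInf hjk ⟨hj, hjB⟩⟩
  · rintro ⟨hk, hkB, hfirst⟩
    refine ⟨⟨k, hk, hkB⟩, le_antisymm (Nat.sInf_le ⟨hk, hkB⟩) ?_⟩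
    exact le_csInf ⟨k, hk, hkB⟩ fun j ⟨hj, hjB⟩ => not_lt.1 fun hjk => hfirst j hj hjk hjB

variable [MeasurableSpace S] [Countable S] [MeasurableSingletonClass S]

lemma measurableSet_piLE_returnTime_eq (B : Set S) (k : ℕ) :
    MeasurableSet[Filtration.piLE k]
      {ω | ω ∈ {ω : ℕ → S | ∃ t, 1 ≤ t ∧ ω t ∈ B} ∧ returnTime B ω = k} := by
  refine measurableSet_piLE_of_forall_eq fun ω ω' heq hω => ?_
  obtain ⟨hk, hkB, hfirst⟩ := exists_and_returnTime_eq_iff.1 hω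
  refine exists_and_returnTime_eq_iff.2 ⟨hk, heq k le_rfl ▸ hkB, fun j hj hjk => ?_⟩
  exact heq j hjk.le ▸ hfirst j hj hjk

lemma measurable_returnTime (B : Set S) : Measurable (returnTime (S := S) B) := by
  set U := {ω : ℕ → S | ∃ t, 1 ≤ t ∧ ω t ∈ B}
  have hU : MeasurableSet U := by
    simp only [U, Set.ofPred_exists, Set.ofPred_and]
    exact .iUnion fun t => (MeasurableSet.const _).inter (measurable_pi_apply t .of_discrete)
  refine measurable_to_countable' fun k => ?_
  have h_fibre : returnTime B ⁻¹' {k} =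
      {ω | ω ∈ U ∧ returnTime B ω = k} ∪ (Uᶜ ∩ {_ω | 0 = k}) := by
    ext ω
    by_cases h : ω ∈ U
    · simp [h]
    · simp [h, returnTime_of_not_exists h]
  rw [h_fibre]
  exact (Filtration.le _ k _ (measurableSet_piLE_returnTime_eq B k)).union
    (hU.compl.inter (.const _))

end ReturnTime

section GeometricMoments

variable {Ω : Type*} [MeasurableSpace Ω] {μ : Measure Ω} {τ : Ω → ℕ} {γ : ℝ}

lemma integrable_pow_comp [IsFiniteMeasure μ] (hτ : Measurable τ) (hγ : ‖γ‖ ≤ 1) :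
    Integrable (fun ω => γ ^ τ ω) μ :=
  integrable_of_nat_index (F := fun n _ => γ ^ n) hτ (fun _ => measurable_const)
    fun n _ => norm_pow_le_one hγ n

lemma integrable_pow_mul_apply {S : Type*} [Finite S] [MeasurableSpace S]
    [MeasurableSingletonClass S] {μ : Measure (ℕ → S)} [IsFiniteMeasure μ] {τ : (ℕ → S) → ℕ}
    (hτ : Measurable τ) (hγ : ‖γ‖ ≤ 1) (v : S → ℝ) :
    Integrable (fun ω => γ ^ τ ω * v (ω (τ ω))) μ := by
  obtain ⟨C, hC⟩ := Finite.exists_le fun a => ‖v a‖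
  exact integrable_of_nat_index (F := fun n ω => γ ^ n * v (ω n)) hτ
    (fun n => (Measurable.of_discrete.comp (measurable_pi_apply n)).const_mul _)
    fun n _ => norm_mul_le_of_le (norm_pow_le_one hγ n) (hC _)

variable [IsProbabilityMeasure μ]

lemma one_sub_integral_pow_eq (hτ : Measurable τ) (hγ : ‖γ‖ ≤ 1) :
    1 - ∫ ω, γ ^ τ ω ∂μ = (1 - γ) * ∫ ω, ∑ t ∈ range (τ ω), γ ^ t ∂μ := by
  rw [← integral_const_mul]
  simp_rw [mul_neg_geom_sum]
  rw [integral_sub (integrable_const 1) (integrable_pow_comp hτ hγ)]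
  simp

lemma integral_pow_le (hτ : Measurable τ) (hτ1 : ∀ᵐ ω ∂μ, 1 ≤ τ ω) (hγ0 : 0 ≤ γ) (hγ1 : γ ≤ 1) :
    ∫ ω, γ ^ τ ω ∂μ ≤ γ := by
  have hγ : ‖γ‖ ≤ 1 := by rwa [Real.norm_of_nonneg hγ0]
  calc ∫ ω, γ ^ τ ω ∂μ ≤ ∫ _, γ ∂μ :=
        integral_mono_ae (integrable_pow_comp hτ hγ) (integrable_const γ)
          (hτ1.mono fun _ h => pow_le_of_le_one hγ0 hγ1 (by omega))
    _ = γ := by simp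

end GeometricMoments

lemma renewal_error_bounds {V R T Tbar e γ L ρ : ℝ} (hV : V = R + Tbar * V + e)
    (he : |e| ≤ L * ρ * Tbar) (hT : 1 - Tbar = (1 - γ) * T) (hTbar : Tbar ≤ γ) (hγ : γ < 1)
    (hLρ : 0 ≤ L * ρ) :
    |V - R / ((1 - γ) * T)| ≤ L * Tbar * ρ / ((1 - γ) * T) ∧
      L * Tbar * ρ / ((1 - γ) * T) ≤ γ * L * ρ / (1 - γ) := by
  have hD : 0 < (1 - γ) * T := by rw [← hT]; linarith
  refine ⟨?_, ?_⟩
  · have h_err : V - R / ((1 - γ) * T) = e / ((1 - γ) * T) := by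
      rw [eq_div_iff hD.ne', sub_mul, div_mul_cancel₀ _ hD.ne', ← hT]
      linarith
    rw [h_err, abs_div, abs_of_pos hD, mul_right_comm]
    exact div_le_div_of_nonneg_right he hD.le
  · rw [div_le_div_iff₀ hD (by linarith), ← hT]
    nlinarith [mul_nonneg hLρ (sub_nonneg.2 hTbar)]

theorem approximate_renewal_relationship_general
    {S : Type*} [Fintype S] [MetricSpace S]
    [MeasurableSpace S] [MeasurableSingletonClass S]
    (P : S → S → ℝ)
    (r : S → S → ℝ) (γ : ℝ) (hγ : γ ∈ Set.Ioo (0 : ℝ) 1) (s₀ : S)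
    (ρ : ℝ) (hρ : 0 < ρ)
    (B : Set S) (hB : B = {s : S | dist s s₀ ≤ ρ})
    (μ : S → Measure (ℕ → S)) (hprob : ∀ s, IsProbabilityMeasure (μ s))
    (hμ : ∀ (s : S) (n : ℕ) (x : ℕ → S),
      ((μ s) {ω | ∀ i ≤ n, ω i = x i}).toReal
        = (if x 0 = s then (1 : ℝ) else 0) * ∏ i ∈ range n, P (x i) (x (i + 1)))
    (V : S → ℝ)
    (hV : ∀ s, V s = ∫ ω, (∑' t : ℕ, γ ^ t * r (ω t) (ω (t + 1))) ∂(μ s))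
    (τ : (ℕ → S) → ℕ)
    (hτ : ∀ ω, τ ω = sInf {t : ℕ | 1 ≤ t ∧ ω t ∈ B})
    (hτfin : ∀ᵐ ω ∂(μ s₀), ∃ t : ℕ, 1 ≤ t ∧ ω t ∈ B)
    (Rρ Tρ Tbarρ : ℝ)
    (hRρ : Rρ = ∫ ω, (∑ t ∈ range (τ ω), γ ^ t * r (ω t) (ω (t + 1))) ∂(μ s₀))
    (hTρ : Tρ = ∫ ω, (∑ t ∈ range (τ ω), γ ^ t) ∂(μ s₀))
    (hTbarρ : Tbarρ = ∫ ω, γ ^ (τ ω) ∂(μ s₀))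
    (L : ℝ) (hL : 0 ≤ L)
    (hLip : ∀ s ∈ B, ∀ s' ∈ B, |V s - V s'| ≤ L * dist s s')
    (hs₀ : s₀ ∈ B) :
    |V s₀ - Rρ / ((1 - γ) * Tρ)| ≤ L * Tbarρ * ρ / ((1 - γ) * Tρ) ∧
      L * Tbarρ * ρ / ((1 - γ) * Tρ) ≤ γ * L * ρ / (1 - γ) := by
  obtain ⟨hγ0, hγ1⟩ := hγ
  have hB_dist : ∀ s ∈ B, dist s s₀ ≤ ρ := by
    rw [hB]
    exact fun _ hs => hs
  have hγ_norm : ‖γ‖ < 1 := by rwa [Real.norm_of_nonneg hγ0.le]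
  obtain rfl : τ = returnTime B := funext hτ
  have hτ_meas := measurable_returnTime B
  have h_hit : ∀ᵐ ω ∂μ s₀, 1 ≤ returnTime B ω ∧ ω (returnTime B ω) ∈ B :=
    hτfin.mono fun _ => returnTime_spec
  obtain ⟨M, hM⟩ := Finite.exists_le fun p : S × S => ‖r p.1 p.2‖
  have h_renewal : V s₀ = Rρ + ∫ ω, γ ^ returnTime B ω * V (ω (returnTime B ω)) ∂μ s₀ := by
    simp only [hV, hRρ]
    exact IsTrajectoryLaw.integral_discountedReturn_eq (P := P) hμ (fun a b => hM (a, b))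
      hγ_norm s₀ hτ_meas (measurableSet_piLE_returnTime_eq B) hτfin
  have h_err : |∫ ω, γ ^ returnTime B ω * V (ω (returnTime B ω)) ∂μ s₀ - Tbarρ * V s₀| ≤
      L * ρ * Tbarρ := by
    rw [hTbarρ]
    refine abs_integral_mul_sub_le (integrable_pow_comp hτ_meas hγ_norm.le)
      (integrable_pow_mul_apply hτ_meas hγ_norm.le V)
      (ae_of_all _ fun _ => by positivity) (h_hit.mono fun ω h => ?_)
    exact (hLip _ h.2 _ hs₀).trans (mul_le_mul_of_nonneg_left (hB_dist _ h.2) hL)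
  refine renewal_error_bounds (by linarith) h_err ?_ ?_ hγ1 (mul_nonneg hL hρ.le)
  · rw [hTbarρ, hTρ]
    exact one_sub_integral_pow_eq hτ_meas hγ_norm.le
  · rw [hTbarρ]
    exact integral_pow_le hτ_meas (h_hit.mono fun _ h => h.1) hγ0.le hγ1.le

/-- **Approximate renewal relationship (Theorem 2, closed-loop finite-state form).**
Let `S` be a nonempty finite metric state space, `P` a Markov transition kernel
on `S` (finite-state form: a row-stochastic matrix), `r : S × S → ℝ`,
`γ ∈ (0,1)`, `s₀ ∈ S` and `ρ > 0`, and let `B = {s : dist s s₀ ≤ ρ}`.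
For each start state `s`, let `μ s` be the trajectory law of the chain started
at `s` (characterized by its cylinder probabilities, as given by the
Ionescu–Tulcea construction) and `V s = E_{μ s}[∑_{t≥0} γ^t r(X_t, X_{t+1})]`.
Under `μ s₀`, let `τ = inf {t ≥ 1 : X_t ∈ B}` (assumed finite a.s.) and set
`Rρ = E[∑_{t<τ} γ^t r(X_t, X_{t+1})]`, `Tρ = E[∑_{t<τ} γ^t]`, `T̄ρ = E[γ^τ]`.
If `V` is `L`-Lipschitz on `B` with `L ≥ 0` and `s₀ ∈ B`, then
`|V(s₀) − Rρ/((1 − γ) Tρ)| ≤ L T̄ρ ρ / ((1 − γ) Tρ) ≤ γ L ρ / (1 − γ)`. -/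
theorem approximate_renewal_relationship
    {S : Type*} [Fintype S] [Nonempty S] [MetricSpace S]
    [MeasurableSpace S] [MeasurableSingletonClass S]
    (P : S → S → ℝ) (hP0 : ∀ s s', 0 ≤ P s s') (hP1 : ∀ s, ∑ s', P s s' = 1)
    (r : S → S → ℝ) (γ : ℝ) (hγ : γ ∈ Set.Ioo (0 : ℝ) 1) (s₀ : S)
    (ρ : ℝ) (hρ : 0 < ρ)
    (B : Set S) (hB : B = {s : S | dist s s₀ ≤ ρ})
    (μ : S → Measure (ℕ → S)) (hprob : ∀ s, IsProbabilityMeasure (μ s))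
    (hμ : ∀ (s : S) (n : ℕ) (x : ℕ → S),
      ((μ s) {ω | ∀ i ≤ n, ω i = x i}).toReal
        = (if x 0 = s then (1 : ℝ) else 0) * ∏ i ∈ range n, P (x i) (x (i + 1)))
    (V : S → ℝ)
    (hV : ∀ s, V s = ∫ ω, (∑' t : ℕ, γ ^ t * r (ω t) (ω (t + 1))) ∂(μ s))
    (τ : (ℕ → S) → ℕ)
    (hτ : ∀ ω, τ ω = sInf {t : ℕ | 1 ≤ t ∧ ω t ∈ B})
    (hτfin : ∀ᵐ ω ∂(μ s₀), ∃ t : ℕ, 1 ≤ t ∧ ω t ∈ B)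
    (Rρ Tρ Tbarρ : ℝ)
    (hRρ : Rρ = ∫ ω, (∑ t ∈ range (τ ω), γ ^ t * r (ω t) (ω (t + 1))) ∂(μ s₀))
    (hTρ : Tρ = ∫ ω, (∑ t ∈ range (τ ω), γ ^ t) ∂(μ s₀))
    (hTbarρ : Tbarρ = ∫ ω, γ ^ (τ ω) ∂(μ s₀))
    (L : ℝ) (hL : 0 ≤ L)
    (hLip : ∀ s ∈ B, ∀ s' ∈ B, |V s - V s'| ≤ L * dist s s')
    (hs₀ : s₀ ∈ B) :
    |V s₀ - Rρ / ((1 - γ) * Tρ)| ≤ L * Tbarρ * ρ / ((1 - γ) * Tρ) ∧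
      L * Tbarρ * ρ / ((1 - γ) * Tρ) ≤ γ * L * ρ / (1 - γ) :=
  approximate_renewal_relationship_general P r γ hγ s₀ ρ hρ B hB μ hprob hμ V hV τ hτ hτfin Rρ Tρ
    Tbarρ hRρ hTρ hTbarρ L hL hLip hs₀
end

section
/- Optimal base-stock threshold for the normalized inventory-control cost with exponential demand. Let a_p, a_h, a_b > 0, γ ∈ (0,1), and λ > 0, and assume a_b > a_p (1 − γ)/γ. Define the normalized cost C : ℝ → ℝ by C(s) = a_p s (1 − γ)/γ + a_h s·1_{s ≥ 0} − a_b s·1_{s < 0}, and define G : ℝ → ℝ by G(θ) = ∫_0^∞ C(θ − x) λ e^{−λ x} dx (the expectation of C(θ − D) for D exponentially distributed with rate λ). Then θ* = (1/λ) · log((a_h + a_b)/(a_h + a_p(1 − γ)/γ)) satisfies θ* > 0 and is the unique global minimizer of G: for every θ ≠ θ*, G(θ*) < G(θ). -/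
/-!
With `b = a_p (1 - γ) / γ` the cost is `C s = (a_h + b) s + (a_h + a_b) (-s)⁺`, so
`G θ = (a_h + b) (θ - 1/l) + (a_h + a_b) E[(D - θ)⁺]`. For `θ ≥ 0`, `E[(D - θ)⁺] = e^{-lθ}/l`,
and `e^u > 1 + u` for `u ≠ 0` shows that `θ ↦ (a_h + b) θ + (a_h + a_b) e^{-lθ}/l` has its strict
minimum where `(a_h + a_b) e^{-lθ} = a_h + b`, i.e. at `θ*`. For `θ ≤ 0`, `G` is affine with
slope `b - a_b < 0`, so `G θ > G 0 > G θ*`.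
-/

open MeasureTheory Real Filter Set Topology

section ExponentialDensity

variable {l : ℝ}

lemma tendsto_sub_mul_exp_neg_mul_atTop (hl : 0 < l) (c : ℝ) :
    Tendsto (fun x => (x - c) * exp (-l * x)) atTop (𝓝 0) := by
  have h₁ := tendsto_rpow_mul_exp_neg_mul_atTop_nhds_zero 1 l hl
  have h₀ := tendsto_rpow_mul_exp_neg_mul_atTop_nhds_zero 0 l hl
  simp only [rpow_one, rpow_zero, one_mul] at h₁ h₀
  simpa [sub_mul] using h₁.sub (h₀.const_mul c)

lemma integrableOn_Ioi_exp_density (hl : 0 < l) (a : ℝ) :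
    IntegrableOn (fun x => l * exp (-l * x)) (Ioi a) :=
  (exp_neg_integrableOn_Ioi a hl).const_mul l

lemma integral_Ioi_exp_density (hl : 0 < l) (a : ℝ) :
    ∫ x in Ioi a, l * exp (-l * x) = exp (-l * a) := by
  rw [integral_const_mul, integral_exp_mul_Ioi (neg_lt_zero.2 hl)]
  field_simp

lemma hasDerivAt_antideriv_sub_mul_exp_density (hl : 0 < l) (θ x : ℝ) :
    HasDerivAt (fun x => -(x - θ + 1 / l) * exp (-l * x)) ((x - θ) * (l * exp (-l * x))) x := by
  have hlin : HasDerivAt (fun x => -(x - θ + 1 / l)) (-1) x :=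
    (((hasDerivAt_id x).sub_const θ).add_const (1 / l)).neg
  have hexp : HasDerivAt (fun x => exp (-l * x)) (exp (-l * x) * -l) x :=
    ((hasDerivAt_id x).const_mul (-l)).exp.congr_deriv (by simp)
  exact (hlin.mul hexp).congr_deriv (by field_simp; ring)

lemma sub_mul_exp_density_nonneg (hl : 0 < l) {θ x : ℝ} (hx : x ∈ Ioi θ) :
    0 ≤ (x - θ) * (l * exp (-l * x)) :=
  mul_nonneg (sub_nonneg.2 (le_of_lt hx)) (by positivity)

lemma tendsto_antideriv_sub_mul_exp_density (hl : 0 < l) (θ : ℝ) :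
    Tendsto (fun x => -(x - θ + 1 / l) * exp (-l * x)) atTop (𝓝 0) := by
  have h := (tendsto_sub_mul_exp_neg_mul_atTop hl (θ - 1 / l)).neg
  rw [neg_zero] at h
  exact h.congr fun x => by ring

lemma integrableOn_Ioi_sub_mul_exp_density (hl : 0 < l) (θ : ℝ) :
    IntegrableOn (fun x => (x - θ) * (l * exp (-l * x))) (Ioi θ) :=
  integrableOn_Ioi_deriv_of_nonneg' (fun x _ => hasDerivAt_antideriv_sub_mul_exp_density hl θ x)
    (fun _ hx => sub_mul_exp_density_nonneg hl hx) (tendsto_antideriv_sub_mul_exp_density hl θ)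

lemma integral_Ioi_sub_mul_exp_density (hl : 0 < l) (θ : ℝ) :
    ∫ x in Ioi θ, (x - θ) * (l * exp (-l * x)) = exp (-l * θ) / l := by
  rw [integral_Ioi_of_hasDerivAt_of_nonneg'
    (fun x _ => hasDerivAt_antideriv_sub_mul_exp_density hl θ x)
    (fun _ hx => sub_mul_exp_density_nonneg hl hx) (tendsto_antideriv_sub_mul_exp_density hl θ)]
  ring

lemma integrableOn_Ioi_zero_sub_mul_exp_density (hl : 0 < l) (θ : ℝ) :
    IntegrableOn (fun x => (θ - x) * (l * exp (-l * x))) (Ioi 0) := by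
  have h := ((integrableOn_Ioi_exp_density hl 0).const_mul θ).sub
    (integrableOn_Ioi_sub_mul_exp_density hl 0)
  exact IntegrableOn.congr_fun h (fun x _ => by simp only [Pi.sub_apply]; ring) measurableSet_Ioi

lemma integral_Ioi_zero_sub_mul_exp_density (hl : 0 < l) (θ : ℝ) :
    ∫ x in Ioi 0, (θ - x) * (l * exp (-l * x)) = θ - 1 / l := by
  have hsplit : (fun x => (θ - x) * (l * exp (-l * x)))
      = fun x => θ * (l * exp (-l * x)) - (x - 0) * (l * exp (-l * x)) := by
    ext x; ring
  rw [hsplit, integral_sub ((integrableOn_Ioi_exp_density hl 0).const_mul θ)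
    (integrableOn_Ioi_sub_mul_exp_density hl 0), integral_const_mul,
    integral_Ioi_exp_density hl, integral_Ioi_sub_mul_exp_density hl]
  simp

lemma max_sub_mul_eq_indicator (θ : ℝ) (f : ℝ → ℝ) :
    (fun x => max (x - θ) 0 * f x) = (Ioi θ).indicator (fun x => (x - θ) * f x) := by
  ext x
  by_cases hx : θ < x
  · rw [indicator_of_mem (mem_Ioi.2 hx), max_eq_left (sub_nonneg.2 hx.le)]
  · have hx' : x ≤ θ := not_lt.1 hx
    rw [indicator_of_notMem (notMem_Ioi.2 hx'), max_eq_right (sub_nonpos.2 hx'), zero_mul]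

lemma integrableOn_Ioi_zero_max_sub_mul_exp_density (hl : 0 < l) (θ : ℝ) :
    IntegrableOn (fun x => max (x - θ) 0 * (l * exp (-l * x))) (Ioi 0) := by
  rw [max_sub_mul_eq_indicator]
  exact ((integrableOn_Ioi_sub_mul_exp_density hl θ).integrable_indicator
    measurableSet_Ioi).integrableOn

lemma integral_Ioi_zero_max_sub_mul_exp_density (hl : 0 < l) {θ : ℝ} (hθ : 0 ≤ θ) :
    ∫ x in Ioi 0, max (x - θ) 0 * (l * exp (-l * x)) = exp (-l * θ) / l := by
  rw [max_sub_mul_eq_indicator, setIntegral_indicator measurableSet_Ioi, Ioi_inter_Ioi,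
    max_eq_right hθ, integral_Ioi_sub_mul_exp_density hl]

lemma integral_Ioi_zero_affine_add_max_mul_exp_density (hl : 0 < l) (α β : ℝ) {θ : ℝ}
    (hθ : 0 ≤ θ) :
    ∫ x in Ioi 0, (α * (θ - x) + β * max (x - θ) 0) * (l * exp (-l * x))
      = α * (θ - 1 / l) + β * (exp (-l * θ) / l) := by
  simp only [add_mul, mul_assoc]
  rw [integral_add ((integrableOn_Ioi_zero_sub_mul_exp_density hl θ).const_mul α)
    ((integrableOn_Ioi_zero_max_sub_mul_exp_density hl θ).const_mul β),
    integral_const_mul, integral_const_mul, integral_Ioi_zero_sub_mul_exp_density hl,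
    integral_Ioi_zero_max_sub_mul_exp_density hl hθ]

end ExponentialDensity

lemma cost_eq_affine_add_max (c a_h a_b s : ℝ) :
    c * s + (if 0 ≤ s then a_h * s else 0) - (if s < 0 then a_b * s else 0)
      = (a_h + c) * s + (a_h + a_b) * max (-s) 0 := by
  rcases le_or_gt 0 s with hs | hs
  · rw [if_pos hs, if_neg (not_lt.2 hs), max_eq_right (neg_nonpos.2 hs)]; ring
  · rw [if_neg (not_le.2 hs), if_pos hs, max_eq_left (neg_nonneg.2 hs.le)]; ring

lemma lt_mul_add_mul_exp_neg_mul_div_of_ne {l A B θ₀ θ : ℝ} (hl : 0 < l) (hA : 0 < A)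
    (h₀ : B * exp (-l * θ₀) = A) (hne : θ ≠ θ₀) :
    A * θ₀ + B * (exp (-l * θ₀) / l) < A * θ + B * (exp (-l * θ) / l) := by
  have hshift : exp (-l * θ) = exp (-l * θ₀) * exp (-(l * (θ - θ₀))) := by
    rw [← exp_add]; ring_nf
  have hexp : -(l * (θ - θ₀)) + 1 < exp (-(l * (θ - θ₀))) :=
    add_one_lt_exp (neg_ne_zero.2 (mul_ne_zero hl.ne' (sub_ne_zero.2 hne)))
  have hdiff : A * θ + B * (exp (-l * θ) / l) - (A * θ₀ + B * (exp (-l * θ₀) / l))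
      = A / l * (l * (θ - θ₀) + exp (-(l * (θ - θ₀))) - 1) := by
    rw [hshift, ← h₀]; field_simp; ring
  have hpos : 0 < A / l * (l * (θ - θ₀) + exp (-(l * (θ - θ₀))) - 1) :=
    mul_pos (div_pos hA hl) (by linarith)
  linarith

theorem inventory_optimal_threshold_general
    (a_p a_h a_b γ l : ℝ)
    (hap : 0 < a_p) (hah : 0 < a_h) (hl : 0 < l)
    (hγ : γ ∈ Set.Ioo (0 : ℝ) 1)
    (hb : a_p * (1 - γ) / γ < a_b)
    (C : ℝ → ℝ)
    (hC : ∀ s, C s = a_p * s * (1 - γ) / γ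
      + (if 0 ≤ s then a_h * s else 0) - (if s < 0 then a_b * s else 0))
    (G : ℝ → ℝ)
    (hG : ∀ θ, G θ = ∫ x in Set.Ioi (0 : ℝ), C (θ - x) * (l * Real.exp (-l * x)))
    (θstar : ℝ)
    (hθstar : θstar = (1 / l) * Real.log ((a_h + a_b) / (a_h + a_p * (1 - γ) / γ))) :
    0 < θstar ∧ ∀ θ : ℝ, θ ≠ θstar → G θstar < G θ := by
  obtain ⟨hγ0, hγ1⟩ := hγ
  set b := a_p * (1 - γ) / γ
  have hb0 : 0 < b := div_pos (mul_pos hap (sub_pos.2 hγ1)) hγ0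
  have hcost : ∀ θ x, C (θ - x) = (a_h + b) * (θ - x) + (a_h + a_b) * max (x - θ) 0 := by
    intro θ x
    rw [hC, ← neg_sub θ x, ← cost_eq_affine_add_max]
    ring
  have hG_nonneg :
      ∀ θ, 0 ≤ θ → G θ = (a_h + b) * (θ - 1 / l) + (a_h + a_b) * (exp (-l * θ) / l) :=
    fun θ hθ => by
      simp only [hG, hcost]
      exact integral_Ioi_zero_affine_add_max_mul_exp_density hl _ _ hθ
  have hG_nonpos : ∀ θ, θ ≤ 0 → G θ = (b - a_b) * (θ - 1 / l) := fun θ hθ => by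
    rw [hG, ← integral_Ioi_zero_sub_mul_exp_density hl θ, ← integral_const_mul]
    refine setIntegral_congr_fun measurableSet_Ioi fun x hx => ?_
    rw [hcost, max_eq_left (by linarith [mem_Ioi.1 hx])]
    ring
  have hratio : 1 < (a_h + a_b) / (a_h + b) := (one_lt_div (by positivity)).2 (by linarith)
  have hθpos : 0 < θstar := hθstar ▸ mul_pos (by positivity) (log_pos hratio)
  have hexp : (a_h + a_b) * exp (-l * θstar) = a_h + b := by
    rw [hθstar, show -l * (1 / l * log ((a_h + a_b) / (a_h + b)))
      = -log ((a_h + a_b) / (a_h + b)) by field_simp, exp_neg,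
      exp_log (zero_lt_one.trans hratio), inv_div, mul_div_cancel₀ _ (by linarith)]
  have hmin : ∀ θ, 0 ≤ θ → θ ≠ θstar → G θstar < G θ := fun θ hθ hne => by
    rw [hG_nonneg θ hθ, hG_nonneg θstar hθpos.le]
    linarith [lt_mul_add_mul_exp_neg_mul_div_of_ne hl (by positivity) hexp hne]
  refine ⟨hθpos, fun θ hne => ?_⟩
  rcases le_or_gt 0 θ with hθ | hθ
  · exact hmin θ hθ hne
  · calc G θstar < G 0 := hmin 0 le_rfl hθpos.ne
      _ < G θ := by
        rw [hG_nonpos θ hθ.le, hG_nonpos 0 le_rfl]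
        nlinarith

/-- **Optimal base-stock threshold for the normalized inventory cost with
exponential demand.** Let `a_p, a_h, a_b > 0`, `γ ∈ (0,1)`, `l > 0`, with
`a_b > a_p (1 − γ)/γ`. With the normalized cost
`C(s) = a_p s (1 − γ)/γ + a_h s 1_{s ≥ 0} − a_b s 1_{s < 0}` and
`G(θ) = ∫_0^∞ C(θ − x) l e^{−l x} dx`, the threshold
`θ* = (1/l) log((a_h + a_b)/(a_h + a_p(1 − γ)/γ))` is positive and is the
unique global minimizer of `G`. -/
theorem inventory_optimal_threshold
    (a_p a_h a_b γ l : ℝ)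
    (hap : 0 < a_p) (hah : 0 < a_h) (hab : 0 < a_b) (hl : 0 < l)
    (hγ : γ ∈ Set.Ioo (0 : ℝ) 1)
    (hb : a_p * (1 - γ) / γ < a_b)
    (C : ℝ → ℝ)
    (hC : ∀ s, C s = a_p * s * (1 - γ) / γ
      + (if 0 ≤ s then a_h * s else 0) - (if s < 0 then a_b * s else 0))
    (G : ℝ → ℝ)
    (hG : ∀ θ, G θ = ∫ x in Set.Ioi (0 : ℝ), C (θ - x) * (l * Real.exp (-l * x)))
    (θstar : ℝ)
    (hθstar : θstar = (1 / l) * Real.log ((a_h + a_b) / (a_h + a_p * (1 - γ) / γ))) :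
    0 < θstar ∧ ∀ θ : ℝ, θ ≠ θstar → G θstar < G θ :=
  inventory_optimal_threshold_general a_p a_h a_b γ l hap hah hl hγ hb C hC G hG θstar hθstar
end
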